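/- arXiv:1611.03155 — 6 statements merged into one kernel-verified Lean document; each statement's English description precedes it below -/
import Mathlib

section
/- Under Assumption 1 (block dependence, with arbitrary dependence within each block) and with every true-null p-value uniformly distributed on [0,1], the two-stage BH method satisfies FDR ≤ (n₀/n)·α, and hence FDR ≤ α, for every configuration of true and false null hypotheses. -/
open MeasureTheory ProbabilityTheory
open scoped Classical

noncomputable def ordStat {b : ℕ} (v : Fin b → ℝ) (k : ℕ) : ℝ :=
  (Multiset.sort (Finset.univ.val.map v) (· ≤ ·)).getD (k - 1) 0

noncomputable def countLe {b : ℕ} (v : Fin b → ℝ) (c : ℝ) : ℕ :=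
  (Finset.univ.filter fun i => v i ≤ c).card

lemma sortList_length {b : ℕ} (v : Fin b → ℝ) :
    (Multiset.sort (Finset.univ.val.map v) (· ≤ ·)).length = b := by
  rw [Multiset.length_sort, Multiset.card_map]
  simp

lemma countLe_eq_countP {b : ℕ} (v : Fin b → ℝ) (c : ℝ) :
    countLe v c
      = (Multiset.sort (Finset.univ.val.map v) (· ≤ ·)).countP (fun x => decide (x ≤ c)) := by
  rw [← Multiset.coe_countP, Multiset.sort_eq, Multiset.countP_map]
  rfl

/-- In a sorted list, the k-th entry is ≤ c iff at least k+1 entries are ≤ c. -/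
lemma sorted_get_le_iff {l : List ℝ} (hs : l.Pairwise (· ≤ ·)) {k : ℕ} (hk : k < l.length)
    (c : ℝ) : l.get ⟨k, hk⟩ ≤ c ↔ k + 1 ≤ l.countP (fun x => decide (x ≤ c)) := by
  have hmono : ∀ (i j : ℕ) (hi : i < l.length) (hj : j < l.length), i ≤ j →
      l.get ⟨i, hi⟩ ≤ l.get ⟨j, hj⟩ := by
    intro i j hi hj hij
    rcases eq_or_lt_of_le hij with rfl | h'
    · exact le_refl _
    · exact hs.rel_get_of_lt h'
  constructor
  · intro h
    have hsplit : l.countP (fun x => decide (x ≤ c))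
        = (l.take (k+1)).countP (fun x => decide (x ≤ c))
          + (l.drop (k+1)).countP (fun x => decide (x ≤ c)) := by
      conv_lhs => rw [← List.take_append_drop (k+1) l]
      rw [List.countP_append]
    have htake : (l.take (k+1)).countP (fun x => decide (x ≤ c)) = k + 1 := by
      rw [List.countP_eq_length.2]
      · rw [List.length_take]; omega
      · intro x hx
        simp only [decide_eq_true_eq]
        obtain ⟨i, hi, rfl⟩ := List.getElem_of_mem hx
        rw [List.length_take] at hi
        have hil : i < l.length := by omega
        have hik : i ≤ k := by omega
        have : (l.take (k+1))[i] = l.get ⟨i, hil⟩ := by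
          rw [List.getElem_take]; simp [List.get_eq_getElem]
        rw [this]
        exact le_trans (hmono i k hil hk hik) h
    omega
  · intro h
    by_contra hc
    push_neg at hc
    have hdrop : (l.drop k).countP (fun x => decide (x ≤ c)) = 0 := by
      rw [List.countP_eq_zero]
      intro x hx
      simp only [decide_eq_true_eq, not_le]
      obtain ⟨i, hi, rfl⟩ := List.getElem_of_mem hx
      rw [List.length_drop] at hi
      have hkil : k + i < l.length := by omega
      have : (l.drop k)[i] = l.get ⟨k + i, hkil⟩ := by
        rw [List.getElem_drop]; simp [List.get_eq_getElem]
      rw [this]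
      exact lt_of_lt_of_le hc (hmono k (k+i) hk hkil (by omega))
    have hsplit : l.countP (fun x => decide (x ≤ c))
        = (l.take k).countP (fun x => decide (x ≤ c))
          + (l.drop k).countP (fun x => decide (x ≤ c)) := by
      conv_lhs => rw [← List.take_append_drop k l]
      rw [List.countP_append]
    have hlen : (l.take k).countP (fun x => decide (x ≤ c)) ≤ k := by
      refine le_trans List.countP_le_length ?_
      rw [List.length_take]; omega
    omega

lemma ordStat_le_iff {b : ℕ} (v : Fin b → ℝ) {k : ℕ} (hk1 : 1 ≤ k) (hkb : k ≤ b) (c : ℝ) :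
    ordStat v k ≤ c ↔ k ≤ countLe v c := by
  have hlen := sortList_length v
  have hklt : k - 1 < (Multiset.sort (Finset.univ.val.map v) (· ≤ ·)).length := by omega
  have hget : ordStat v k = (Multiset.sort (Finset.univ.val.map v) (· ≤ ·)).get ⟨k - 1, hklt⟩ := by
    rw [ordStat, List.getD_eq_getElem _ _ hklt]
    rfl
  rw [hget, sorted_get_le_iff (Multiset.pairwise_sort _ _) hklt c, countLe_eq_countP]
  omega

def nTot {b : ℕ} (s : Fin b → ℕ) : ℕ := ∑ i, s i

noncomputable def blockPV {b : ℕ} (s : Fin b → ℕ) (x : ∀ i, Fin (s i) → ℝ) (i : Fin b) : ℝ :=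
  ((nTot s : ℝ) / (b : ℝ)) * ⨅ j, x i j

noncomputable def numRejBlocks {b : ℕ} (α : ℝ) (q : Fin b → ℝ) : ℕ :=
  sSup {k | k ∈ Set.Icc 1 b ∧ ordStat q k ≤ (k : ℝ) * α / (b : ℝ)}

def rejSet {b : ℕ} (α : ℝ) (v : Fin b → ℝ) : Set ℕ :=
  {k | k ∈ Set.Icc 1 b ∧ ordStat v k ≤ (k : ℝ) * α / (b : ℝ)}

lemma numRejBlocks_def {b : ℕ} (α : ℝ) (v : Fin b → ℝ) :
    numRejBlocks α v = sSup (rejSet α v) := rfl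

lemma rejSet_bdd {b : ℕ} (α : ℝ) (v : Fin b → ℝ) : BddAbove (rejSet α v) :=
  ⟨b, fun k hk => hk.1.2⟩

lemma mem_rejSet_iff {b : ℕ} (α : ℝ) (v : Fin b → ℝ) (k : ℕ) :
    k ∈ rejSet α v ↔ 1 ≤ k ∧ k ≤ b ∧ k ≤ countLe v ((k : ℝ) * α / (b : ℝ)) := by
  unfold rejSet
  constructor
  · rintro ⟨⟨h1, h2⟩, h3⟩
    exact ⟨h1, h2, (ordStat_le_iff v h1 h2 _).1 h3⟩
  · rintro ⟨h1, h2, h3⟩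
    exact ⟨⟨h1, h2⟩, (ordStat_le_iff v h1 h2 _).2 h3⟩

lemma le_numRejBlocks {b : ℕ} {α : ℝ} {v : Fin b → ℝ} {k : ℕ} (h : k ∈ rejSet α v) :
    k ≤ numRejBlocks α v :=
  le_csSup (rejSet_bdd α v) h

lemma numRejBlocks_mem {b : ℕ} {α : ℝ} {v : Fin b → ℝ} (h : 1 ≤ numRejBlocks α v) :
    numRejBlocks α v ∈ rejSet α v := by
  rcases Set.eq_empty_or_nonempty (rejSet α v) with he | hne
  · rw [numRejBlocks_def, he] at h
    simp at h
  · exact Nat.sSup_mem hne (rejSet_bdd α v)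

lemma numRejBlocks_le {b : ℕ} (α : ℝ) (v : Fin b → ℝ) : numRejBlocks α v ≤ b := by
  rcases Nat.eq_zero_or_pos (numRejBlocks α v) with h | h
  · omega
  · exact (numRejBlocks_mem h).1.2

lemma countLe_le_update {b : ℕ} (v : Fin b → ℝ) (i : Fin b) {c : ℝ} (hc : 0 ≤ c) :
    countLe v c ≤ countLe (Function.update v i 0) c := by
  apply Finset.card_le_card
  intro j hj
  simp only [Finset.mem_filter, Finset.mem_univ, true_and] at hj ⊢
  rcases eq_or_ne j i with rfl | hne
  · rw [Function.update_self]; exact hc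
  · rw [Function.update_of_ne hne]; exact hj

lemma countLe_update_eq {b : ℕ} (v : Fin b → ℝ) (i : Fin b) {c : ℝ} (hc : 0 ≤ c)
    (hvi : v i ≤ c) : countLe (Function.update v i 0) c = countLe v c := by
  unfold countLe
  congr 1
  apply Finset.filter_congr
  intro j _
  rcases eq_or_ne j i with rfl | hne
  · simp [Function.update_self, hc, hvi]
  · simp [Function.update_of_ne hne]

/-- Key leave-one-out lemma: if block i's p-value is below the threshold, zeroing it
does not change the number of rejected blocks. -/
lemma numRejBlocks_update_eq {b : ℕ} {α : ℝ} (hα : 0 ≤ α) {v : Fin b → ℝ} {i : Fin b}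
    (hB : 1 ≤ numRejBlocks α v)
    (hvi : v i ≤ (numRejBlocks α v : ℝ) * α / (b : ℝ)) :
    numRejBlocks α (Function.update v i 0) = numRejBlocks α v := by
  set B := numRejBlocks α v with hBdef
  have hbb : (0:ℝ) ≤ (b:ℝ) := Nat.cast_nonneg b
  have hcnonneg : ∀ k : ℕ, 0 ≤ (k : ℝ) * α / (b : ℝ) := by
    intro k
    positivity
  -- B ≤ B'
  have hle : B ≤ numRejBlocks α (Function.update v i 0) := by
    apply le_numRejBlocks
    have hmem := numRejBlocks_mem hB
    rw [mem_rejSet_iff] at hmem ⊢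
    exact ⟨hmem.1, hmem.2.1, le_trans hmem.2.2 (countLe_le_update v i (hcnonneg B))⟩
  -- B' ≤ B
  have hge : numRejBlocks α (Function.update v i 0) ≤ B := by
    set B' := numRejBlocks α (Function.update v i 0) with hB'def
    have hB' : 1 ≤ B' := le_trans hB hle
    have hmem := numRejBlocks_mem hB'
    rw [mem_rejSet_iff] at hmem
    apply le_numRejBlocks
    rw [mem_rejSet_iff]
    refine ⟨hmem.1, hmem.2.1, ?_⟩
    have hvi' : v i ≤ (B' : ℝ) * α / (b : ℝ) := by
      refine le_trans hvi ?_
      gcongr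
    rw [← countLe_update_eq v i (hcnonneg B') hvi']
    exact hmem.2.2
  omega

lemma measurable_countLe {b : ℕ} (c : ℝ) :
    Measurable (fun v : Fin b → ℝ => countLe v c) := by
  have : (fun v : Fin b → ℝ => countLe v c)
      = fun v => ∑ i : Fin b, if v i ≤ c then 1 else 0 := by
    funext v
    rw [countLe, Finset.card_filter]
  rw [this]
  apply Finset.measurable_sum
  intro i _
  apply Measurable.ite ?_ measurable_const measurable_const
  exact measurableSet_le (measurable_pi_apply i) measurable_const

lemma measurableSet_mem_rejSet {b : ℕ} (α : ℝ) (k : ℕ) :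
    MeasurableSet {v : Fin b → ℝ | k ∈ rejSet α v} := by
  by_cases hk : 1 ≤ k ∧ k ≤ b
  · have : {v : Fin b → ℝ | k ∈ rejSet α v}
        = (fun v => countLe v ((k : ℝ) * α / (b : ℝ))) ⁻¹' (Set.Ici k) := by
      ext v
      simp [mem_rejSet_iff, hk.1, hk.2, Set.mem_preimage]
    rw [this]
    exact measurable_countLe _ (measurableSet_Ici)
  · have : {v : Fin b → ℝ | k ∈ rejSet α v} = ∅ := by
      ext v
      simp only [Set.mem_setOf_eq, Set.mem_empty_iff_false, iff_false]
      rw [mem_rejSet_iff]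
      omega
    rw [this]
    exact MeasurableSet.empty

lemma numRejBlocks_eq_zero_iff {b : ℕ} (α : ℝ) (v : Fin b → ℝ) :
    numRejBlocks α v = 0 ↔ ∀ k, k ∉ rejSet α v := by
  constructor
  · intro h k hk
    have h1 : 1 ≤ k := hk.1.1
    have := le_numRejBlocks hk
    omega
  · intro h
    rw [numRejBlocks_def, Set.eq_empty_iff_forall_notMem.2 h]
    rw [Nat.sSup_def ⟨0, by simp⟩]
    simp [Nat.find_eq_zero]

lemma numRejBlocks_eq_iff {b : ℕ} (α : ℝ) (v : Fin b → ℝ) {m : ℕ} (hm : 1 ≤ m) :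
    numRejBlocks α v = m ↔ m ∈ rejSet α v ∧ ∀ k, m < k → k ∉ rejSet α v := by
  constructor
  · intro h
    refine ⟨h ▸ numRejBlocks_mem (h ▸ hm), fun k hk hmem => ?_⟩
    have := le_numRejBlocks hmem
    omega
  · rintro ⟨h1, h2⟩
    have hle := le_numRejBlocks h1
    have hmem := numRejBlocks_mem (le_trans hm hle)
    by_contra hne
    exact h2 _ (by omega) hmem

lemma measurable_numRejBlocks {b : ℕ} (α : ℝ) :
    Measurable (fun v : Fin b → ℝ => numRejBlocks α v) := by
  apply measurable_to_countable'
  intro m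
  rcases Nat.eq_zero_or_pos m with rfl | hm
  · have : (fun v : Fin b → ℝ => numRejBlocks α v) ⁻¹' {0}
        = ⋂ k ∈ Finset.range (b+1), {v : Fin b → ℝ | k ∈ rejSet α v}ᶜ := by
      ext v
      simp only [Set.mem_preimage, Set.mem_singleton_iff, numRejBlocks_eq_zero_iff,
        Set.mem_iInter, Set.mem_compl_iff, Set.mem_setOf_eq, Finset.mem_range]
      constructor
      · exact fun h k _ => h k
      · intro h k hk
        have hkb : k ≤ b := hk.1.2
        exact h k (by omega) hk
    rw [this]
    exact MeasurableSet.biInter (Set.to_countable _)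
      (fun k _ => (measurableSet_mem_rejSet α k).compl)
  · have : (fun v : Fin b → ℝ => numRejBlocks α v) ⁻¹' {m}
        = {v : Fin b → ℝ | m ∈ rejSet α v}
          ∩ ⋂ k ∈ Finset.Icc (m+1) b, {v : Fin b → ℝ | k ∈ rejSet α v}ᶜ := by
      ext v
      simp only [Set.mem_preimage, Set.mem_singleton_iff, numRejBlocks_eq_iff α v hm,
        Set.mem_inter_iff, Set.mem_setOf_eq, Set.mem_iInter, Set.mem_compl_iff,
        Finset.mem_Icc]
      constructor
      · rintro ⟨h1, h2⟩
        exact ⟨h1, fun k hk => h2 k (by omega)⟩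
      · rintro ⟨h1, h2⟩
        refine ⟨h1, fun k hk hkm => ?_⟩
        have hkb : k ≤ b := hkm.1.2
        exact h2 k ⟨by omega, hkb⟩ hkm
    rw [this]
    exact (measurableSet_mem_rejSet α m).inter
      (MeasurableSet.biInter (Set.to_countable _)
        (fun k _ => (measurableSet_mem_rejSet α k).compl))

noncomputable def rejectBH {b : ℕ} (α : ℝ) (s : Fin b → ℕ) (pihat : ℝ)
    (x : ∀ i, Fin (s i) → ℝ) : Set ((i : Fin b) × Fin (s i)) :=
  let q : Fin b → ℝ := fun i => pihat * blockPV s x i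
  let B := numRejBlocks α q
  {p | 1 ≤ B ∧ q p.1 ≤ ordStat q B ∧ pihat * x p.1 p.2 ≤ (B : ℝ) * α / (nTot s : ℝ)}

noncomputable def FDR {Ω ι : Type*} [MeasurableSpace Ω] (μ : Measure Ω)
    (Rej : Ω → Set ι) (T : Finset ι) : ℝ :=
  ∫ ω, ((Rej ω ∩ ↑T).ncard : ℝ) / max ((Rej ω).ncard : ℝ) 1 ∂μ

lemma mem_rejectBH_iff {b : ℕ} (α : ℝ) (s : Fin b → ℕ) (x : ∀ i, Fin (s i) → ℝ)
    (p : (i : Fin b) × Fin (s i)) :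
    p ∈ rejectBH α s 1 x ↔
      1 ≤ numRejBlocks α (blockPV s x)
        ∧ blockPV s x p.1 ≤ ordStat (blockPV s x) (numRejBlocks α (blockPV s x))
        ∧ x p.1 p.2 ≤ (numRejBlocks α (blockPV s x) : ℝ) * α / (nTot s : ℝ) := by
  have h1 : (fun i => 1 * blockPV s x i) = blockPV s x := by
    funext i
    rw [one_mul]
  rw [rejectBH]
  simp only [h1, Set.mem_setOf_eq, one_mul]

lemma nTot_pos {b : ℕ} (hb : 0 < b) {s : Fin b → ℕ} (hs : ∀ i, 0 < s i) : 0 < nTot s := by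
  have : Nonempty (Fin b) := ⟨⟨0, hb⟩⟩
  exact Finset.sum_pos (fun i _ => hs i) Finset.univ_nonempty

lemma card_rejectBH_ge {b : ℕ} (hb : 0 < b) {s : Fin b → ℕ} (hs : ∀ i, 0 < s i)
    {α : ℝ} (hα : 0 ≤ α) (x : ∀ i, Fin (s i) → ℝ)
    (hB : 1 ≤ numRejBlocks α (blockPV s x)) :
    numRejBlocks α (blockPV s x) ≤ (rejectBH α s 1 x).ncard := by
  set v := blockPV s x with hv
  set B := numRejBlocks α v with hBdef
  have hmem := numRejBlocks_mem hB
  have hBb : B ≤ b := hmem.1.2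
  have hord : ordStat v B ≤ (B : ℝ) * α / (b : ℝ) := hmem.2
  have hcount : B ≤ countLe v (ordStat v B) := (ordStat_le_iff v hB hBb _).1 le_rfl
  have hn : 0 < nTot s := nTot_pos hb hs
  have hnb : (0:ℝ) < (nTot s : ℝ) / (b : ℝ) := by
    apply div_pos
    · exact_mod_cast hn
    · exact_mod_cast hb
  -- for every selected block there is a rejected hypothesis in it
  have hkey : ∀ i : Fin b, v i ≤ ordStat v B →
      ∃ j : Fin (s i), x i j ≤ (B : ℝ) * α / (nTot s : ℝ) := by
    intro i hvi
    have : Nonempty (Fin (s i)) := ⟨⟨0, hs i⟩⟩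
    obtain ⟨j0, _, hj0⟩ := Finset.exists_min_image Finset.univ (x i)
      ⟨⟨0, hs i⟩, Finset.mem_univ _⟩
    refine ⟨j0, ?_⟩
    have hj0le : x i j0 ≤ ⨅ j, x i j :=
      le_ciInf (fun j => hj0 j (Finset.mem_univ j))
    have h1 : ((nTot s : ℝ) / (b : ℝ)) * x i j0 ≤ (B : ℝ) * α / (b : ℝ) := by
      calc ((nTot s : ℝ) / (b : ℝ)) * x i j0
          ≤ ((nTot s : ℝ) / (b : ℝ)) * ⨅ j, x i j := by
            exact mul_le_mul_of_nonneg_left hj0le hnb.le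
        _ = v i := rfl
        _ ≤ ordStat v B := hvi
        _ ≤ (B : ℝ) * α / (b : ℝ) := hord
    have heq : ((nTot s : ℝ) / (b : ℝ)) * ((B : ℝ) * α / (nTot s : ℝ))
        = (B : ℝ) * α / (b : ℝ) := by
      have hb0 : (b : ℝ) ≠ 0 := by positivity
      have hn0 : (nTot s : ℝ) ≠ 0 := by
        have : (0:ℝ) < (nTot s : ℝ) := by exact_mod_cast hn
        positivity
      field_simp
    rw [← heq] at h1
    exact le_of_mul_le_mul_left h1 hnb
  -- build an injection from selected blocks into the rejection set
  set f : Fin b → (i : Fin b) × Fin (s i) := fun i =>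
    if h : ∃ j : Fin (s i), x i j ≤ (B : ℝ) * α / (nTot s : ℝ) then ⟨i, Classical.choose h⟩
    else ⟨i, ⟨0, hs i⟩⟩ with hf
  have hsub : ∀ i ∈ Finset.univ.filter (fun i => v i ≤ ordStat v B),
      f i ∈ (rejectBH α s 1 x).toFinset := by
    intro i hi
    have hvi : v i ≤ ordStat v B := (Finset.mem_filter.1 hi).2
    have hex := hkey i hvi
    rw [hf]
    simp only [dif_pos hex]
    rw [Set.mem_toFinset, mem_rejectBH_iff]
    exact ⟨hB, hvi, Classical.choose_spec hex⟩
  have hinj := Finset.card_le_card_of_injOn f hsub (by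
    intro i _ i' _ h
    have h1 : (f i).1 = (f i').1 := congrArg Sigma.fst h
    rw [hf] at h1
    simp only at h1
    split_ifs at h1 <;> exact h1)
  have hcl : countLe v (ordStat v B)
      = (Finset.univ.filter (fun i => v i ≤ ordStat v B)).card := rfl
  rw [Set.ncard_eq_toFinset_card']
  omega
theorem stmt0 {Ω : Type} [MeasurableSpace Ω] (μ : Measure Ω) [IsProbabilityMeasure μ]
    {b : ℕ} (hb : 0 < b) (s : Fin b → ℕ) (hs : ∀ i, 0 < s i)
    (P : ∀ i : Fin b, Fin (s i) → Ω → ℝ)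
    (hmeas : ∀ i j, Measurable (P i j))
    (hrange : ∀ i j ω, P i j ω ∈ Set.Icc (0:ℝ) 1)
    (T : Finset ((i : Fin b) × Fin (s i)))
    (hindep : iIndepFun (m := fun i => inferInstance) (fun i ω => fun j => P i j ω) μ)
    (hunif : ∀ p ∈ T, μ.map (P p.1 p.2) = volume.restrict (Set.Icc (0:ℝ) 1))
    (α : ℝ) (hα : 0 ≤ α) :
    FDR μ (fun ω => rejectBH α s 1 (fun i j => P i j ω)) T
        ≤ (T.card : ℝ) / (nTot s : ℝ) * α ∧
      FDR μ (fun ω => rejectBH α s 1 (fun i j => P i j ω)) T ≤ α := by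
  have hn : 0 < nTot s := nTot_pos hb hs
  have hn0 : (0:ℝ) < (nTot s : ℝ) := by exact_mod_cast hn
  have hb0 : (0:ℝ) < (b : ℝ) := by exact_mod_cast hb
  set x : Ω → ∀ i, Fin (s i) → ℝ := fun ω i j => P i j ω with hxdef
  set v : Ω → Fin b → ℝ := fun ω => blockPV s (x ω) with hvdef
  set B : Ω → ℕ := fun ω => numRejBlocks α (v ω) with hBdef
  set B' : Fin b → Ω → ℕ := fun i0 ω => numRejBlocks α (Function.update (v ω) i0 0) with hB'def
  set Rej : Ω → Set ((i : Fin b) × Fin (s i)) := fun ω => rejectBH α s 1 (x ω) with hRejdef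
  set Ak : ((i : Fin b) × Fin (s i)) → ℕ → Set Ω := fun p k =>
    {ω | B' p.1 ω = k} ∩ {ω | P p.1 p.2 ω ≤ (k : ℝ) * α / (nTot s : ℝ)} with hAkdef
  set g : ((i : Fin b) × Fin (s i)) → Ω → ℝ := fun p ω =>
    ∑ k ∈ Finset.range (b+1), Set.indicator (Ak p k) (fun _ => 1 / max (k : ℝ) 1) ω with hgdef
  -- nonnegativity of g
  have hg_nonneg : ∀ p ω, 0 ≤ g p ω := by
    intro p ω
    apply Finset.sum_nonneg
    intro k _
    apply Set.indicator_nonneg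
    intro y _
    positivity
  -- measurability
  have hmeasv : Measurable v := by
    apply measurable_pi_lambda
    intro i
    exact (Measurable.iInf (fun j => hmeas i j)).const_mul _
  have hmeasupd : ∀ i0 : Fin b, Measurable (fun w : Fin b → ℝ => Function.update w i0 0) := by
    intro i0
    apply measurable_pi_lambda
    intro i
    have : (fun w : Fin b → ℝ => Function.update w i0 0 i)
        = fun w => if i = i0 then 0 else w i := by
      funext w
      rw [Function.update_apply]
    rw [this]
    by_cases h : i = i0
    · simp only [if_pos h]; exact measurable_const
    · simp only [if_neg h]; exact measurable_pi_apply i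
  have hmeasB' : ∀ i0, Measurable (B' i0) := fun i0 =>
    (measurable_numRejBlocks α).comp ((hmeasupd i0).comp hmeasv)
  have hAkmeas : ∀ p k, MeasurableSet (Ak p k) := by
    intro p k
    exact (hmeasB' p.1 (measurableSet_singleton k)).inter
      (measurableSet_le (hmeas p.1 p.2) measurable_const)
  have hg_int : ∀ p, Integrable (g p) μ := by
    intro p
    apply integrable_finset_sum
    intro k _
    exact (integrable_const _).indicator (hAkmeas p k)
  -- pointwise bound
  have hpoint : ∀ ω, ((Rej ω ∩ ↑T).ncard : ℝ) / max ((Rej ω).ncard : ℝ) 1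
      ≤ ∑ p ∈ T, g p ω := by
    intro ω
    by_cases hBω : 1 ≤ B ω
    · -- at least B blocks rejected
      have hR : B ω ≤ (Rej ω).ncard := card_rejectBH_ge hb hs hα (x ω) hBω
      have hmaxR : (B ω : ℝ) ≤ max ((Rej ω).ncard : ℝ) 1 := by
        refine le_trans ?_ (le_max_left _ _)
        exact_mod_cast hR
      have hmaxpos : (0:ℝ) < max ((Rej ω).ncard : ℝ) 1 :=
        lt_of_lt_of_le zero_lt_one (le_max_right _ _)
      have hnum : ((Rej ω ∩ ↑T).ncard : ℝ)
          = ∑ p ∈ T, (if p ∈ Rej ω then (1:ℝ) else 0) := by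
        have hset : Rej ω ∩ ↑T = ↑(T.filter (fun p => p ∈ Rej ω)) := by
          ext p
          simp only [Set.mem_inter_iff, Finset.coe_filter, Set.mem_setOf_eq,
            Finset.mem_coe]
          tauto
        rw [hset, Set.ncard_coe_finset, Finset.card_filter, Nat.cast_sum]
        apply Finset.sum_congr rfl
        intro p _
        split_ifs <;> simp
      rw [hnum, Finset.sum_div]
      apply Finset.sum_le_sum
      intro p hp
      by_cases hpR : p ∈ Rej ω
      · rw [if_pos hpR]
        obtain ⟨hB1, hqord, hxP⟩ := (mem_rejectBH_iff α s (x ω) p).1 hpR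
        -- the block p-value is below the block threshold
        have hq : v ω p.1 ≤ (B ω : ℝ) * α / (b : ℝ) := by
          have hbdd : BddBelow (Set.range (x ω p.1)) :=
            Set.Finite.bddBelow (Set.finite_range _)
          have hinf : (⨅ j, x ω p.1 j) ≤ x ω p.1 p.2 := ciInf_le hbdd p.2
          have h1 : v ω p.1 ≤ ((nTot s : ℝ) / (b : ℝ)) * (x ω p.1 p.2) := by
            apply mul_le_mul_of_nonneg_left hinf
            positivity
          have h2 : ((nTot s : ℝ) / (b : ℝ)) * (x ω p.1 p.2)
              ≤ ((nTot s : ℝ) / (b : ℝ)) * ((B ω : ℝ) * α / (nTot s : ℝ)) := by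
            apply mul_le_mul_of_nonneg_left hxP
            positivity
          have heq : ((nTot s : ℝ) / (b : ℝ)) * ((B ω : ℝ) * α / (nTot s : ℝ))
              = (B ω : ℝ) * α / (b : ℝ) := by
            have hbne : (b : ℝ) ≠ 0 := ne_of_gt hb0
            have hnne : (nTot s : ℝ) ≠ 0 := ne_of_gt hn0
            field_simp
          exact le_trans h1 (heq ▸ h2)
        have hB'eq : B' p.1 ω = B ω := numRejBlocks_update_eq hα hBω hq
        have hk0mem : B ω ∈ Finset.range (b+1) := by
          rw [Finset.mem_range]
          exact Nat.lt_succ_of_le (numRejBlocks_le α (v ω))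
        have hωAk : ω ∈ Ak p (B ω) := ⟨hB'eq, hxP⟩
        have hsingle : Set.indicator (Ak p (B ω)) (fun _ => 1 / max ((B ω : ℕ) : ℝ) 1) ω
            ≤ g p ω := by
          apply Finset.single_le_sum (f := fun k =>
            Set.indicator (Ak p k) (fun _ => 1 / max ((k : ℕ) : ℝ) 1) ω) ?_ hk0mem
          intro k _
          apply Set.indicator_nonneg
          intro y _
          positivity
        rw [Set.indicator_of_mem hωAk] at hsingle
        refine le_trans ?_ hsingle
        rw [div_le_div_iff₀ hmaxpos (lt_of_lt_of_le zero_lt_one (le_max_right _ _))]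
        rw [one_mul, one_mul]
        have : max ((B ω : ℕ) : ℝ) 1 = (B ω : ℝ) := by
          apply max_eq_left
          exact_mod_cast hBω
        rw [this]
        exact hmaxR
      · rw [if_neg hpR, zero_div]
        exact hg_nonneg p ω
    · -- no rejections at all
      have hRe : Rej ω = ∅ := by
        ext p
        rw [Set.mem_empty_iff_false, iff_false]
        intro hmem
        exact hBω ((mem_rejectBH_iff α s (x ω) p).1 hmem).1
      rw [hRe]
      simp only [Set.empty_inter, Set.ncard_empty, Nat.cast_zero, zero_div]
      exact Finset.sum_nonneg (fun p _ => hg_nonneg p ω)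
  -- per-hypothesis integral bound
  have hgint_le : ∀ p ∈ T, ∫ ω, g p ω ∂μ ≤ α / (nTot s : ℝ) := by
    intro p hp
    have hfmeas : ∀ i, Measurable (fun ω (j : Fin (s i)) => P i j ω) :=
      fun i => measurable_pi_lambda _ (fun j => hmeas i j)
    -- independence of the p-value and the leave-one-out block count
    have hInd : IndepFun (P p.1 p.2) (B' p.1) μ := by
      have hbase := hindep.indepFun_finset {p.1} ({p.1}ᶜ) disjoint_compl_right hfmeas
      set φ : ((i : {y // y ∈ ({p.1} : Finset (Fin b))}) → Fin (s ↑i) → ℝ) → ℝ :=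
        fun z => z ⟨p.1, Finset.mem_singleton_self p.1⟩ p.2 with hφdef
      set ψ : ((i : {y // y ∈ ({p.1}ᶜ : Finset (Fin b))}) → Fin (s ↑i) → ℝ) → ℕ :=
        fun z => numRejBlocks α (fun i =>
          if h : i = p.1 then 0
          else ((nTot s : ℝ) / (b : ℝ)) * ⨅ j : Fin (s i),
            z ⟨i, by simp [Finset.mem_compl, Finset.mem_singleton, h]⟩ j) with hψdef
      have hφ : Measurable φ :=
        (measurable_pi_apply p.2).comp (measurable_pi_apply _)
      have hψ : Measurable ψ := by
        apply (measurable_numRejBlocks α).comp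
        apply measurable_pi_lambda
        intro i
        by_cases h : i = p.1
        · simp only [dif_pos h]
          exact measurable_const
        · simp only [dif_neg h]
          exact (Measurable.iInf (fun j =>
            (measurable_pi_apply j).comp (measurable_pi_apply _))).const_mul _
      have hcomp := hbase.comp hφ hψ
      have hX : (φ ∘ fun a (i : {y // y ∈ ({p.1} : Finset (Fin b))}) =>
          (fun ω j => P (↑i) j ω) a) = P p.1 p.2 := by
        funext ω
        rfl
      have hY : (ψ ∘ fun a (i : {y // y ∈ (({p.1} : Finset (Fin b))ᶜ)}) =>
          (fun ω j => P (↑i) j ω) a) = B' p.1 := by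
        funext ω
        show numRejBlocks α _ = numRejBlocks α _
        congr 1
        funext i
        by_cases h : i = p.1
        · subst h
          simp [Function.update_self]
        · rw [dif_neg h, Function.update_of_ne h]
          rfl
      rw [hX, hY] at hcomp
      exact hcomp
    -- the uniform tail bound
    have htail : ∀ c : ℝ, 0 ≤ c → μ (P p.1 p.2 ⁻¹' Set.Iic c) ≤ ENNReal.ofReal c := by
      intro c hc
      rw [← Measure.map_apply (hmeas p.1 p.2) measurableSet_Iic, hunif p hp,
        Measure.restrict_apply measurableSet_Iic]
      calc volume (Set.Iic c ∩ Set.Icc 0 1)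
          ≤ volume (Set.Icc 0 c) := by
            apply measure_mono
            rintro y ⟨hy1, hy2, _⟩
            exact ⟨hy2, hy1⟩
        _ = ENNReal.ofReal c := by rw [Real.volume_Icc, sub_zero]
    -- compute the integral of g p
    have hAk_ne_top : ∀ k, μ (Ak p k) ≠ ⊤ := fun k => measure_ne_top μ _
    have hint_eq : ∫ ω, g p ω ∂μ
        = ∑ k ∈ Finset.range (b+1), (μ (Ak p k)).toReal • (1 / max (k : ℝ) 1) := by
      rw [hgdef]
      rw [integral_finset_sum _ (fun k _ => (integrable_const _).indicator (hAkmeas p k))]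
      apply Finset.sum_congr rfl
      intro k _
      exact integral_indicator_const _ (hAkmeas p k)
    rw [hint_eq]
    -- bound each term
    have hterm : ∀ k ∈ Finset.range (b+1),
        (μ (Ak p k)).toReal • (1 / max (k : ℝ) 1)
          ≤ (μ (B' p.1 ⁻¹' {k})).toReal * (α / (nTot s : ℝ)) := by
      intro k _
      set c : ℝ := (k : ℝ) * α / (nTot s : ℝ) with hcdef
      have hc : 0 ≤ c := by positivity
      have hmul : μ (Ak p k) = μ (B' p.1 ⁻¹' {k}) * μ (P p.1 p.2 ⁻¹' Set.Iic c) := by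
        have h1 := hInd.measure_inter_preimage_eq_mul (Set.Iic c) {k}
          measurableSet_Iic (measurableSet_singleton k)
        have h2 : Ak p k = P p.1 p.2 ⁻¹' Set.Iic c ∩ B' p.1 ⁻¹' {k} := by
          rw [hAkdef]
          ext ω
          simp only [Set.mem_inter_iff, Set.mem_setOf_eq, Set.mem_preimage,
            Set.mem_Iic, Set.mem_singleton_iff]
          tauto
        rw [h2, h1, mul_comm]
      have hle1 : μ (Ak p k) ≤ μ (B' p.1 ⁻¹' {k}) * ENNReal.ofReal c := by
        rw [hmul]
        exact mul_le_mul_right (htail c hc) _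
      have hle2 : (μ (Ak p k)).toReal ≤ (μ (B' p.1 ⁻¹' {k})).toReal * c := by
        have hne : μ (B' p.1 ⁻¹' {k}) * ENNReal.ofReal c ≠ ⊤ :=
          ENNReal.mul_ne_top (measure_ne_top μ _) ENNReal.ofReal_ne_top
        calc (μ (Ak p k)).toReal ≤ (μ (B' p.1 ⁻¹' {k}) * ENNReal.ofReal c).toReal :=
              ENNReal.toReal_mono hne hle1
          _ = (μ (B' p.1 ⁻¹' {k})).toReal * c := by
              rw [ENNReal.toReal_mul, ENNReal.toReal_ofReal hc]
      have hck : c * (1 / max (k : ℝ) 1) ≤ α / (nTot s : ℝ) := by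
        rcases Nat.eq_zero_or_pos k with rfl | hk
        · simp only [hcdef, Nat.cast_zero, zero_mul, zero_div, zero_mul]
          positivity
        · have hk1 : (1 : ℝ) ≤ (k : ℝ) := by exact_mod_cast hk
          have hkne : (k : ℝ) ≠ 0 := by positivity
          rw [max_eq_left hk1]
          apply le_of_eq
          rw [hcdef]
          field_simp
      have hmax : (0:ℝ) ≤ 1 / max (k : ℝ) 1 := by positivity
      calc (μ (Ak p k)).toReal • (1 / max (k : ℝ) 1)
          = (μ (Ak p k)).toReal * (1 / max (k : ℝ) 1) := by rw [smul_eq_mul]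
        _ ≤ ((μ (B' p.1 ⁻¹' {k})).toReal * c) * (1 / max (k : ℝ) 1) :=
            mul_le_mul_of_nonneg_right hle2 hmax
        _ = (μ (B' p.1 ⁻¹' {k})).toReal * (c * (1 / max (k : ℝ) 1)) := by ring
        _ ≤ (μ (B' p.1 ⁻¹' {k})).toReal * (α / (nTot s : ℝ)) :=
            mul_le_mul_of_nonneg_left hck ENNReal.toReal_nonneg
    calc ∑ k ∈ Finset.range (b+1), (μ (Ak p k)).toReal • (1 / max (k : ℝ) 1)
        ≤ ∑ k ∈ Finset.range (b+1), (μ (B' p.1 ⁻¹' {k})).toReal * (α / (nTot s : ℝ)) :=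
          Finset.sum_le_sum hterm
      _ = (∑ k ∈ Finset.range (b+1), (μ (B' p.1 ⁻¹' {k})).toReal) * (α / (nTot s : ℝ)) := by
          rw [Finset.sum_mul]
      _ ≤ 1 * (α / (nTot s : ℝ)) := by
          apply mul_le_mul_of_nonneg_right ?_ (by positivity)
          have hdisj : (Finset.range (b+1) : Set ℕ).PairwiseDisjoint
              (fun k => B' p.1 ⁻¹' {k}) := by
            intro k _ k' _ hkk'
            apply Set.disjoint_left.2
            intro ω h1 h2
            exact hkk' (h1.symm.trans h2)
          have hU : ∑ k ∈ Finset.range (b+1), μ (B' p.1 ⁻¹' {k})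
              = μ (⋃ k ∈ Finset.range (b+1), B' p.1 ⁻¹' {k}) :=
            (measure_biUnion_finset hdisj
              (fun k _ => hmeasB' p.1 (measurableSet_singleton k))).symm
          have hsum : ∑ k ∈ Finset.range (b+1), (μ (B' p.1 ⁻¹' {k})).toReal
              = (∑ k ∈ Finset.range (b+1), μ (B' p.1 ⁻¹' {k})).toReal :=
            (ENNReal.toReal_sum (fun k _ => measure_ne_top μ _)).symm
          rw [hsum, hU]
          have := measure_mono (μ := μ) (Set.subset_univ
            (⋃ k ∈ Finset.range (b+1), B' p.1 ⁻¹' {k}))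
          rw [measure_univ] at this
          calc (μ (⋃ k ∈ Finset.range (b+1), B' p.1 ⁻¹' {k})).toReal
              ≤ (1 : ENNReal).toReal := ENNReal.toReal_mono (by simp) this
            _ = 1 := by simp
      _ = α / (nTot s : ℝ) := one_mul _
  -- main estimate
  have hmain : FDR μ Rej T
      ≤ (T.card : ℝ) * (α / (nTot s : ℝ)) := by
    rw [FDR]
    calc ∫ ω, ((Rej ω ∩ ↑T).ncard : ℝ) / max ((Rej ω).ncard : ℝ) 1 ∂μ
        ≤ ∫ ω, ∑ p ∈ T, g p ω ∂μ := by
          apply integral_mono_of_nonneg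
          · apply Filter.Eventually.of_forall
            intro ω
            apply div_nonneg (Nat.cast_nonneg _)
            exact le_trans zero_le_one (le_max_right _ _)
          · exact integrable_finset_sum _ (fun p _ => hg_int p)
          · exact Filter.Eventually.of_forall hpoint
      _ = ∑ p ∈ T, ∫ ω, g p ω ∂μ := integral_finset_sum _ (fun p _ => hg_int p)
      _ ≤ ∑ _p ∈ T, α / (nTot s : ℝ) := Finset.sum_le_sum hgint_le
      _ = (T.card : ℝ) * (α / (nTot s : ℝ)) := by
          rw [Finset.sum_const, nsmul_eq_mul]
  have hTn : (T.card : ℝ) ≤ (nTot s : ℝ) := by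
    have h1 : T.card ≤ Fintype.card ((i : Fin b) × Fin (s i)) := Finset.card_le_univ T
    have h2 : Fintype.card ((i : Fin b) × Fin (s i)) = nTot s := by
      rw [Fintype.card_sigma]
      simp [nTot]
    exact_mod_cast h2 ▸ h1
  constructor
  · calc FDR μ Rej T
        ≤ (T.card : ℝ) * (α / (nTot s : ℝ)) := hmain
      _ = (T.card : ℝ) / (nTot s : ℝ) * α := by ring
  · calc FDR μ Rej T
        ≤ (T.card : ℝ) * (α / (nTot s : ℝ)) := hmain
      _ = (T.card : ℝ) / (nTot s : ℝ) * α := by ring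
      _ ≤ 1 * α := by
          apply mul_le_mul_of_nonneg_right ?_ hα
          rw [div_le_one hn0]
          exact hTn
      _ = α := one_mul α
end

section
/- Under Assumption 1 (block dependence) with every true-null p-value uniformly distributed on [0,1], for every λ with (2b+3)^{−2/(b+2)} ≤ λ < 1 the estimator n̂₀^{(1)}(P) = (n − R(λ) + s_max)/(1−λ), where R(λ) = #{(i,j) : P_{ij} ≤ λ} and s_max = max_{1≤i≤b} s_i, satisfies Property 1, i.e., Σ_{(i,j)∈T} E_DU[1/n̂₀^{(1)}(P^{(−i)}, 0)] ≤ 1. -/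
open MeasureTheory ProbabilityTheory

/-- The Dirac-uniform modification: the `p`-values in block `i0` and those corresponding
to false null hypotheses (indices outside `T`) are replaced by `0`. -/
def DUmod {b : ℕ} (s : Fin b → ℕ) (T : Finset ((i : Fin b) × Fin (s i)))
    (i0 : Fin b) (x : ∀ i, Fin (s i) → ℝ) : ∀ i, Fin (s i) → ℝ :=
  fun i j => if i = i0 ∨ (⟨i, j⟩ : (i : Fin b) × Fin (s i)) ∉ T then 0 else x i j

/-- The estimator `n̂₀⁽¹⁾ = (n - R(λ) + s_max)/(1 - λ)` where `R(λ)` is the number of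
`p`-values not exceeding `λ` and `s_max` is the maximum block size. -/
noncomputable def nhat1 {b : ℕ} (s : Fin b → ℕ) (lam : ℝ)
    (x : ∀ i, Fin (s i) → ℝ) : ℝ :=
  ((nTot s : ℝ) - ({p : (i : Fin b) × Fin (s i) | x p.1 p.2 ≤ lam}.ncard : ℝ)
    + ((Finset.univ.sup s : ℕ) : ℝ)) / (1 - lam)

lemma expect_nat_eq {Ω : Type} [MeasurableSpace Ω] (μ : Measure Ω) [IsProbabilityMeasure μ]
    (X : Ω → ℕ) (hX : Measurable X) (n : ℕ) (hXb : ∀ ω, X ω ≤ n) (f : ℕ → ℝ) :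
    ∫ ω, f (X ω) ∂μ = ∑ v ∈ Finset.range (n+1), (μ (X ⁻¹' {v})).toReal * f v := by
  have h1 : ∀ ω, f (X ω) = ∑ v ∈ Finset.range (n+1),
      Set.indicator (X ⁻¹' {v}) (fun _ => f v) ω := by
    intro ω
    rw [Finset.sum_eq_single (X ω)]
    · simp [Set.indicator]
    · intro v _ hne
      simp only [Set.indicator, Set.mem_preimage, Set.mem_singleton_iff]
      rw [if_neg (fun h => hne h.symm)]
    · intro h
      exact absurd (Finset.mem_range.2 (Nat.lt_succ_of_le (hXb ω))) h
  rw [integral_congr_ae (Filter.Eventually.of_forall h1),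
    integral_finset_sum _ (fun v _ =>
      (integrable_const (f v)).indicator (hX (MeasurableSet.singleton v)))]
  refine Finset.sum_congr rfl fun v _ => ?_
  rw [integral_indicator_const _ (hX (MeasurableSet.singleton v)), smul_eq_mul]
  rfl

lemma chord_ineq {u : ℝ} (h0 : 0 ≤ u) (h1 : u ≤ 1) {v t : ℕ} (hvt : v ≤ t) :
    (t:ℝ) * u ^ v + v ≤ t + v * u ^ t := by
  have key : ∀ m : ℕ, 1 - u ^ m = (1-u) * ∑ j ∈ Finset.range m, u ^ j := by
    intro m
    have h := geom_sum_mul u m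
    linear_combination h
  have htv : (0:ℝ) ≤ (t:ℝ) - v := by
    have := (Nat.cast_le (α := ℝ)).2 hvt
    linarith
  have hA : (v:ℝ) * u ^ v ≤ ∑ j ∈ Finset.range v, u ^ j := by
    calc (v:ℝ) * u ^ v = ∑ _j ∈ Finset.range v, u ^ v := by
          rw [Finset.sum_const, Finset.card_range, nsmul_eq_mul]
      _ ≤ _ := Finset.sum_le_sum fun j hj =>
          pow_le_pow_of_le_one h0 h1 (le_of_lt (Finset.mem_range.1 hj))
  have hB : ∑ j ∈ Finset.Ico v t, u ^ j ≤ ((t:ℝ) - v) * u ^ v := by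
    calc ∑ j ∈ Finset.Ico v t, u ^ j ≤ ∑ _j ∈ Finset.Ico v t, u ^ v :=
          Finset.sum_le_sum fun j hj =>
            pow_le_pow_of_le_one h0 h1 (Finset.mem_Ico.1 hj).1
      _ = ((t:ℝ) - v) * u ^ v := by
          rw [Finset.sum_const, Nat.card_Ico, nsmul_eq_mul, Nat.cast_sub hvt]
  have hsplit : ∑ j ∈ Finset.range v, u ^ j + ∑ j ∈ Finset.Ico v t, u ^ j
      = ∑ j ∈ Finset.range t, u ^ j := by
    rw [Finset.range_eq_Ico, Finset.range_eq_Ico]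
    exact Finset.sum_Ico_consecutive (fun j => u ^ j) (Nat.zero_le v) hvt
  have h1u : 0 ≤ 1 - u := by linarith
  have hvc : (0:ℝ) ≤ v := Nat.cast_nonneg v
  have hmain : (v:ℝ) * ∑ j ∈ Finset.range t, u ^ j
      ≤ (t:ℝ) * ∑ j ∈ Finset.range v, u ^ j := by
    have b1 := mul_le_mul_of_nonneg_left hB hvc
    have b2 := mul_le_mul_of_nonneg_left hA htv
    nlinarith [hsplit]
  have hmul := mul_le_mul_of_nonneg_left hmain h1u
  have e1 : (v:ℝ) * (1 - u ^ t) = (1-u) * ((v:ℝ) * ∑ j ∈ Finset.range t, u ^ j) := by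
    rw [mul_comm ((v:ℝ)) (1 - u ^ t), key t]; ring
  have e2 : (t:ℝ) * (1 - u ^ v) = (1-u) * ((t:ℝ) * ∑ j ∈ Finset.range v, u ^ j) := by
    rw [mul_comm ((t:ℝ)) (1 - u ^ v), key v]; ring
  nlinarith [hmul, e1, e2]

lemma integral_prod_iIndep {Ω : Type} [MeasurableSpace Ω] (μ : Measure Ω) [IsProbabilityMeasure μ]
    {ι : Type*} {Z : ι → Ω → ℝ}
    (hind : iIndepFun Z μ)
    (hZm : ∀ i, Measurable (Z i)) (hbd : ∀ i ω, |Z i ω| ≤ 1)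
    (M : Finset ι) : ∫ ω, ∏ i ∈ M, Z i ω ∂μ = ∏ i ∈ M, ∫ ω, Z i ω ∂μ := by
  classical
  have hint : ∀ N : Finset ι, Integrable (fun ω => ∏ i ∈ N, Z i ω) μ := by
    intro N
    refine (integrable_const (1:ℝ)).mono'
      (Finset.measurable_prod N fun i _ => hZm i).aestronglyMeasurable
      (Filter.Eventually.of_forall fun ω => ?_)
    rw [Real.norm_eq_abs, Finset.abs_prod]
    exact Finset.prod_le_one (fun i _ => abs_nonneg _) (fun i _ => hbd i ω)
  induction M using Finset.cons_induction with
  | empty => simp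
  | cons j M hj ih =>
    have heq : (∏ i ∈ M, Z i) = fun ω => ∏ i ∈ M, Z i ω := by
      ext ω; simp [Finset.prod_apply]
    have hIndep : IndepFun (Z j) (fun ω => ∏ i ∈ M, Z i ω) μ := by
      have h := (hind.indepFun_finsetProd_of_notMem hZm hj).symm
      rwa [heq] at h
    have hZj : Integrable (Z j) μ := by
      refine (integrable_const (1:ℝ)).mono' (hZm j).aestronglyMeasurable
        (Filter.Eventually.of_forall fun ω => ?_)
      rw [Real.norm_eq_abs]; exact hbd j ω
    have h2 := hIndep.integral_mul_eq_mul_integral hZj.aestronglyMeasurable (hint M).aestronglyMeasurable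
    simp only [Finset.prod_cons]
    rw [← ih]
    exact h2

noncomputable section

def tcBlock {b : ℕ} (s : Fin b → ℕ) (T : Finset ((i : Fin b) × Fin (s i))) (i : Fin b) : ℕ :=
  ∑ j, if (⟨i, j⟩ : (i : Fin b) × Fin (s i)) ∈ T then 1 else 0

def Vsum {b : ℕ} (s : Fin b → ℕ) (T : Finset ((i : Fin b) × Fin (s i))) (lam : ℝ)
    (i : Fin b) (y : Fin (s i) → ℝ) : ℕ :=
  ∑ j, if (⟨i, j⟩ : (i : Fin b) × Fin (s i)) ∈ T ∧ lam < y j then 1 else 0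

end

lemma Vsum_le_tc {b : ℕ} (s : Fin b → ℕ) (T : Finset ((i : Fin b) × Fin (s i))) (lam : ℝ)
    (i : Fin b) (y : Fin (s i) → ℝ) : Vsum s T lam i y ≤ tcBlock s T i := by
  classical
  refine Finset.sum_le_sum fun j _ => ?_
  by_cases h : (⟨i, j⟩ : (i : Fin b) × Fin (s i)) ∈ T ∧ lam < y j
  · rw [if_pos h, if_pos h.1]
  · rw [if_neg h]; positivity

lemma tc_le_s {b : ℕ} (s : Fin b → ℕ) (T : Finset ((i : Fin b) × Fin (s i))) (i : Fin b) :
    tcBlock s T i ≤ s i := by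
  classical
  calc tcBlock s T i ≤ ∑ _j : Fin (s i), 1 := Finset.sum_le_sum fun j _ => by split <;> omega
    _ = s i := by simp

lemma DU_count {b : ℕ} (s : Fin b → ℕ) (T : Finset ((i : Fin b) × Fin (s i))) (lam : ℝ)
    (hl0 : 0 ≤ lam) (i0 : Fin b) (x : ∀ i, Fin (s i) → ℝ) :
    {p : (i : Fin b) × Fin (s i) | DUmod s T i0 x p.1 p.2 ≤ lam}.ncard
      + ∑ i ∈ Finset.univ.erase i0, Vsum s T lam i (x i) = nTot s := by
  classical
  have h1 : {p : (i : Fin b) × Fin (s i) | DUmod s T i0 x p.1 p.2 ≤ lam}.ncard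
      = (Finset.univ.filter (fun p : (i : Fin b) × Fin (s i) =>
          DUmod s T i0 x p.1 p.2 ≤ lam)).card := by
    rw [Set.ncard_eq_toFinset_card', Set.toFinset_setOf]
  have h2 : ∑ i ∈ Finset.univ.erase i0, Vsum s T lam i (x i)
      = (Finset.univ.filter (fun p : (i : Fin b) × Fin (s i) =>
          ¬ DUmod s T i0 x p.1 p.2 ≤ lam)).card := by
    rw [Finset.card_filter, ← Finset.univ_sigma_univ, Finset.sum_sigma]
    rw [← Finset.add_sum_erase _ _ (Finset.mem_univ i0)]
    have hz : ∑ j : Fin (s i0),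
        (if ¬ DUmod s T i0 x (⟨i0, j⟩ : (i : Fin b) × Fin (s i)).1
            (⟨i0, j⟩ : (i : Fin b) × Fin (s i)).2 ≤ lam then 1 else 0) = 0 := by
      refine Finset.sum_eq_zero fun j _ => ?_
      rw [if_neg]
      push_neg
      simp only [DUmod, if_pos (Or.inl rfl)]
      exact hl0
    rw [hz, zero_add]
    refine Finset.sum_congr rfl fun i hi => ?_
    have hii0 : ¬ i = i0 := (Finset.mem_erase.1 hi).1
    unfold Vsum
    refine Finset.sum_congr rfl fun j _ => ?_
    congr 1
    simp only [DUmod]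
    by_cases hT : (⟨i, j⟩ : (i : Fin b) × Fin (s i)) ∈ T
    · rw [if_neg (by tauto)]
      simp [hT, not_le]
    · rw [if_pos (Or.inr hT)]
      simp [hT, hl0]
  rw [h1, h2, Finset.card_filter_add_card_filter_not, Finset.card_univ]
  simp [nTot, Fintype.card_sigma]

lemma nhat1_DUmod {b : ℕ} (s : Fin b → ℕ) (T : Finset ((i : Fin b) × Fin (s i))) (lam : ℝ)
    (hl0 : 0 ≤ lam) (i0 : Fin b) (x : ∀ i, Fin (s i) → ℝ) :
    nhat1 s lam (DUmod s T i0 x)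
      = (((∑ i ∈ Finset.univ.erase i0, Vsum s T lam i (x i) : ℕ) : ℝ)
          + ((Finset.univ.sup s : ℕ) : ℝ)) / (1 - lam) := by
  have h := DU_count s T lam hl0 i0 x
  unfold nhat1
  congr 1
  have h' : ({p : (i : Fin b) × Fin (s i) | DUmod s T i0 x p.1 p.2 ≤ lam}.ncard : ℝ)
      + ((∑ i ∈ Finset.univ.erase i0, Vsum s T lam i (x i) : ℕ) : ℝ) = (nTot s : ℝ) := by
    exact_mod_cast congrArg (Nat.cast : ℕ → ℝ) h
  linarith

noncomputable section
def Cfun {Ω : Type} {b : ℕ} (s : Fin b → ℕ) (T : Finset ((i : Fin b) × Fin (s i))) (lam : ℝ)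
    (P : ∀ i : Fin b, Fin (s i) → Ω → ℝ) (i0 : Fin b) (ω : Ω) : ℕ :=
  ∑ i ∈ Finset.univ.erase i0, Vsum s T lam i (fun j => P i j ω)

def hpoly {b : ℕ} (s : Fin b → ℕ) (T : Finset ((i : Fin b) × Fin (s i))) (lam : ℝ)
    (i : Fin b) (u : ℝ) : ℝ := lam + (1-lam) * u ^ (tcBlock s T i)
end

theorem stmt2 {Ω : Type} [MeasurableSpace Ω] (μ : Measure Ω) [IsProbabilityMeasure μ]
    {b : ℕ} (hb : 0 < b) (s : Fin b → ℕ) (hs : ∀ i, 0 < s i)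
    (P : ∀ i : Fin b, Fin (s i) → Ω → ℝ)
    (hmeas : ∀ i j, Measurable (P i j))
    (hrange : ∀ i j ω, P i j ω ∈ Set.Icc (0:ℝ) 1)
    (T : Finset ((i : Fin b) × Fin (s i)))
    -- Assumption 1: block dependence (the blocks are mutually independent)
    (hindep : iIndepFun (fun i ω => fun j => P i j ω) μ)
    -- true null p-values are uniform on [0,1]
    (hunif : ∀ p ∈ T, μ.map (P p.1 p.2) = volume.restrict (Set.Icc (0:ℝ) 1))
    (lam : ℝ) (hlam₁ : (2 * (b : ℝ) + 3) ^ (-2 / ((b : ℝ) + 2)) ≤ lam) (hlam₂ : lam < 1) :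
    -- `n̂₀⁽¹⁾` satisfies Property 1:
    Monotone (nhat1 s lam) ∧ (∀ x, 0 < nhat1 s lam x) ∧
      ∑ p ∈ T, ∫ ω, 1 / nhat1 s lam (DUmod s T p.1 (fun i j => P i j ω)) ∂μ ≤ 1 := by
  classical
  have h0lam : 0 < lam := lt_of_lt_of_le (Real.rpow_pos_of_pos (by positivity) _) hlam₁
  have hl0 : (0:ℝ) ≤ lam := le_of_lt h0lam
  have h1l : (0:ℝ) < 1 - lam := by linarith
  have hsm1 : 1 ≤ Finset.univ.sup s := le_trans (hs ⟨0, hb⟩) (Finset.le_sup (Finset.mem_univ _))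
  have htcs : ∀ i, tcBlock s T i ≤ Finset.univ.sup s :=
    fun i => le_trans (tc_le_s s T i) (Finset.le_sup (Finset.mem_univ i))
  refine ⟨?_, ?_, ?_⟩
  · -- Monotone
    intro x y hxy
    unfold nhat1
    have hsub : {p : (i : Fin b) × Fin (s i) | y p.1 p.2 ≤ lam}
        ⊆ {p : (i : Fin b) × Fin (s i) | x p.1 p.2 ≤ lam} :=
      fun p hp => le_trans (hxy p.1 p.2) hp
    have hcard := Set.ncard_le_ncard hsub (Set.toFinite _)
    have hcard' := (Nat.cast_le (α := ℝ)).2 hcard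
    gcongr
  · -- positive
    intro x
    unfold nhat1
    apply div_pos ?_ h1l
    have hle : {p : (i : Fin b) × Fin (s i) | x p.1 p.2 ≤ lam}.ncard ≤ nTot s := by
      have h := Set.ncard_le_ncard
        (Set.subset_univ {p : (i : Fin b) × Fin (s i) | x p.1 p.2 ≤ lam}) (Set.toFinite _)
      rw [Set.ncard_univ, Nat.card_eq_fintype_card, Fintype.card_sigma] at h
      simpa [nTot] using h
    have h1 := (Nat.cast_le (α := ℝ)).2 hle
    have h2 : (1:ℝ) ≤ (Finset.univ.sup s : ℕ) := by exact_mod_cast hsm1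
    linarith
  · -- main inequality
    have hVy : ∀ i : Fin b, Measurable (fun y : Fin (s i) → ℝ => Vsum s T lam i y) := by
      intro i
      unfold Vsum
      refine Finset.measurable_sum _ fun j _ => ?_
      by_cases hT : (⟨i, j⟩ : (i : Fin b) × Fin (s i)) ∈ T
      · simp only [hT, true_and]
        exact Measurable.ite (measurableSet_lt measurable_const (measurable_pi_apply j))
          measurable_const measurable_const
      · simp only [hT, false_and, if_false]
        exact measurable_const
    have hV : ∀ i : Fin b, Measurable (fun ω => Vsum s T lam i (fun j => P i j ω)) :=
      fun i => (hVy i).comp (measurable_pi_lambda _ (fun j => hmeas i j))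
    have hC : ∀ i0 : Fin b, Measurable (Cfun s T lam P i0) := by
      intro i0
      unfold Cfun
      exact Finset.measurable_sum _ fun i _ => hV i
    have hCb : ∀ (i0 : Fin b) (ω : Ω), Cfun s T lam P i0 ω ≤ nTot s := by
      intro i0 ω
      unfold Cfun
      calc ∑ i ∈ Finset.univ.erase i0, Vsum s T lam i (fun j => P i j ω)
          ≤ ∑ i ∈ Finset.univ.erase i0, s i :=
            Finset.sum_le_sum fun i _ => le_trans (Vsum_le_tc s T lam i _) (tc_le_s s T i)
        _ ≤ ∑ i, s i := Finset.sum_le_sum_of_subset (Finset.erase_subset _ _)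
        _ = nTot s := rfl
    -- pointwise rewrite of the integrand
    have hpt : ∀ (i0 : Fin b) (ω : Ω),
        1 / nhat1 s lam (DUmod s T i0 (fun i j => P i j ω))
          = (1-lam) * (1 / ((Cfun s T lam P i0 ω : ℝ) + ((Finset.univ.sup s : ℕ) : ℝ))) := by
      intro i0 ω
      rw [nhat1_DUmod s T lam hl0 i0 (fun i j => P i j ω), one_div_div]
      rw [div_eq_mul_one_div]
      rfl
    have hgroup : ∀ F : Fin b → ℝ, ∑ p ∈ T, F p.1 = ∑ i, (tcBlock s T i : ℝ) * F i := by
      intro F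
      have h1 : ∑ p ∈ T, F p.1
          = ∑ p ∈ Finset.univ, if p ∈ T then F p.1 else 0 := by
        rw [Finset.sum_ite_mem, Finset.univ_inter]
      rw [h1, ← Finset.univ_sigma_univ, Finset.sum_sigma]
      refine Finset.sum_congr rfl fun i _ => ?_
      unfold tcBlock
      push_cast
      rw [Finset.sum_mul]
      refine Finset.sum_congr rfl fun j _ => ?_
      by_cases hT : (⟨i, j⟩ : (i : Fin b) × Fin (s i)) ∈ T <;> simp [hT]
    have hcont : ∀ j : Fin b, Continuous (hpoly s T lam j) := by
      intro j
      unfold hpoly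
      exact continuous_const.add (continuous_const.mul (continuous_pow _))
    have hZmeas : ∀ (u : ℝ) (i : Fin b),
        Measurable (fun ω => u ^ Vsum s T lam i (fun j => P i j ω)) :=
      fun u i => measurable_from_top.comp (hV i)
    have hZind : ∀ u : ℝ, iIndepFun
        (fun i ω => u ^ Vsum s T lam i (fun j => P i j ω)) μ := by
      intro u
      exact hindep.comp (fun i (y : Fin (s i) → ℝ) => u ^ Vsum s T lam i y)
        (fun i => measurable_from_top.comp (hVy i))
    have hZbd : ∀ (u : ℝ), 0 ≤ u → u ≤ 1 → ∀ (i : Fin b) (ω : Ω),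
        |u ^ Vsum s T lam i (fun j => P i j ω)| ≤ 1 := by
      intro u h0 h1 i ω
      rw [abs_of_nonneg (pow_nonneg h0 _)]
      exact pow_le_one₀ h0 h1
    have hZint : ∀ (u : ℝ), 0 ≤ u → u ≤ 1 → ∀ i : Fin b,
        Integrable (fun ω => u ^ Vsum s T lam i (fun j => P i j ω)) μ := by
      intro u h0 h1 i
      refine (integrable_const (1:ℝ)).mono' (hZmeas u i).aestronglyMeasurable
        (Filter.Eventually.of_forall fun ω => ?_)
      rw [Real.norm_eq_abs]
      exact hZbd u h0 h1 i ω
    have hfac : ∀ (u : ℝ), 0 ≤ u → u ≤ 1 → ∀ i0 : Fin b,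
        (∫ ω, u ^ (Cfun s T lam P i0 ω + Finset.univ.sup s - 1) ∂μ)
          = u ^ (Finset.univ.sup s - 1) * ∏ i ∈ Finset.univ.erase i0,
              ∫ ω, u ^ Vsum s T lam i (fun j => P i j ω) ∂μ := by
      intro u h0 h1 i0
      have hpt2 : ∀ ω, u ^ (Cfun s T lam P i0 ω + Finset.univ.sup s - 1)
          = u ^ (Finset.univ.sup s - 1) * ∏ i ∈ Finset.univ.erase i0,
              u ^ Vsum s T lam i (fun j => P i j ω) := by
        intro ω
        rw [Finset.prod_pow_eq_pow_sum, ← pow_add]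
        congr 1
        have h2 : Cfun s T lam P i0 ω
            = ∑ i ∈ Finset.univ.erase i0, Vsum s T lam i (fun j => P i j ω) := rfl
        omega
      rw [integral_congr_ae (Filter.Eventually.of_forall hpt2), integral_const_mul]
      congr 1
      exact integral_prod_iIndep μ (hZind u) (hZmeas u) (hZbd u h0 h1) _
    have hIint : ∀ (i : Fin b) (j : Fin (s i)), Integrable
        (fun ω => (if (⟨i, j⟩ : (i : Fin b) × Fin (s i)) ∈ T ∧ lam < P i j ω
          then (1:ℝ) else 0)) μ := by
      intro i j
      by_cases hT : (⟨i, j⟩ : (i : Fin b) × Fin (s i)) ∈ T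
      · simp only [hT, true_and]
        have hm : Measurable fun ω => (if lam < P i j ω then (1:ℝ) else 0) :=
          Measurable.ite (measurableSet_lt measurable_const (hmeas i j)) measurable_const
            measurable_const
        refine (integrable_const (1:ℝ)).mono' hm.aestronglyMeasurable
          (Filter.Eventually.of_forall fun ω => ?_)
        rw [Real.norm_eq_abs]
        split <;> simp
      · simp only [hT, false_and, if_false]
        exact integrable_const 0
    have hEV : ∀ i : Fin b, ∫ ω, ((Vsum s T lam i (fun j => P i j ω) : ℕ) : ℝ) ∂μ
        = (tcBlock s T i : ℝ) * (1 - lam) := by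
      intro i
      have hcast : ∀ ω, ((Vsum s T lam i (fun j => P i j ω) : ℕ) : ℝ)
          = ∑ j, (if (⟨i, j⟩ : (i : Fin b) × Fin (s i)) ∈ T ∧ lam < P i j ω
              then (1:ℝ) else 0) := by
        intro ω
        unfold Vsum
        push_cast
        rfl
      rw [integral_congr_ae (Filter.Eventually.of_forall hcast),
          integral_finset_sum _ (fun j _ => hIint i j)]
      have hterm : ∀ j : Fin (s i),
          (∫ ω, (if (⟨i, j⟩ : (i : Fin b) × Fin (s i)) ∈ T ∧ lam < P i j ω
            then (1:ℝ) else 0) ∂μ)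
            = if (⟨i, j⟩ : (i : Fin b) × Fin (s i)) ∈ T then 1 - lam else 0 := by
        intro j
        by_cases hT : (⟨i, j⟩ : (i : Fin b) × Fin (s i)) ∈ T
        · simp only [hT, true_and, if_true]
          have heq : ∀ ω, (if lam < P i j ω then (1:ℝ) else 0)
              = Set.indicator (P i j ⁻¹' Set.Ioi lam) (fun _ => (1:ℝ)) ω := by
            intro ω
            simp [Set.indicator, Set.mem_Ioi]
          rw [integral_congr_ae (Filter.Eventually.of_forall heq),
              integral_indicator_const _ ((hmeas i j) measurableSet_Ioi), smul_eq_mul, mul_one]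
          rw [measureReal_def, ← Measure.map_apply (hmeas i j) measurableSet_Ioi, hunif ⟨i, j⟩ hT,
              Measure.restrict_apply measurableSet_Ioi]
          have hset : Set.Ioi lam ∩ Set.Icc (0:ℝ) 1 = Set.Ioc lam 1 := by
            ext z
            simp only [Set.mem_inter_iff, Set.mem_Ioi, Set.mem_Icc, Set.mem_Ioc]
            constructor
            · rintro ⟨ha, _, hc⟩
              exact ⟨ha, hc⟩
            · rintro ⟨ha, hc⟩
              exact ⟨ha, le_of_lt (lt_of_le_of_lt hl0 ha), hc⟩
          rw [hset, Real.volume_Ioc, ENNReal.toReal_ofReal (by linarith)]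
        · simp [hT]
      rw [Finset.sum_congr rfl (fun j _ => hterm j)]
      unfold tcBlock
      push_cast
      rw [Finset.sum_mul]
      refine Finset.sum_congr rfl fun j _ => ?_
      by_cases hT : (⟨i, j⟩ : (i : Fin b) × Fin (s i)) ∈ T <;> simp [hT]
    have hgb : ∀ (u : ℝ), 0 ≤ u → u ≤ 1 → ∀ i : Fin b,
        (∫ ω, u ^ Vsum s T lam i (fun j => P i j ω) ∂μ) ≤ hpoly s T lam i u := by
      intro u h0 h1 i
      rcases Nat.eq_zero_or_pos (tcBlock s T i) with hz | hpos
      · have hv0 : ∀ ω, Vsum s T lam i (fun j => P i j ω) = 0 := by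
          intro ω
          have := Vsum_le_tc s T lam i (fun j => P i j ω)
          omega
        have hone : (fun ω => u ^ Vsum s T lam i (fun j => P i j ω)) = fun _ => (1:ℝ) := by
          funext ω
          rw [hv0 ω, pow_zero]
        rw [hone, integral_const]
        unfold hpoly
        rw [hz, pow_zero]
        simp
      · have hch : ∀ ω, (tcBlock s T i : ℝ) * u ^ (Vsum s T lam i (fun j => P i j ω))
            + ((Vsum s T lam i (fun j => P i j ω) : ℕ) : ℝ)
            ≤ (tcBlock s T i : ℝ)
              + ((Vsum s T lam i (fun j => P i j ω) : ℕ) : ℝ) * u ^ (tcBlock s T i) :=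
          fun ω => chord_ineq h0 h1 (Vsum_le_tc s T lam i _)
        have hVint : Integrable (fun ω => ((Vsum s T lam i (fun j => P i j ω) : ℕ) : ℝ)) μ := by
          refine (integrable_const ((Finset.univ.sup s : ℕ) : ℝ)).mono'
            (measurable_from_top.comp (hV i)).aestronglyMeasurable
            (Filter.Eventually.of_forall fun ω => ?_)
          rw [Real.norm_eq_abs, abs_of_nonneg (Nat.cast_nonneg _)]
          exact_mod_cast le_trans (Vsum_le_tc s T lam i _) (htcs i)
        have h1int : Integrable (fun ω => (tcBlock s T i : ℝ)
            * u ^ (Vsum s T lam i (fun j => P i j ω))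
            + ((Vsum s T lam i (fun j => P i j ω) : ℕ) : ℝ)) μ := by
          exact ((hZint u h0 h1 i).const_mul _).add hVint
        have h2int : Integrable (fun ω => (tcBlock s T i : ℝ)
            + ((Vsum s T lam i (fun j => P i j ω) : ℕ) : ℝ) * u ^ (tcBlock s T i)) μ := by
          exact (integrable_const _).add (hVint.mul_const _)
        have hmono := integral_mono (μ := μ)
          (f := fun ω => (tcBlock s T i : ℝ) * u ^ (Vsum s T lam i (fun j => P i j ω))
            + ((Vsum s T lam i (fun j => P i j ω) : ℕ) : ℝ))
          (g := fun ω => (tcBlock s T i : ℝ)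
            + ((Vsum s T lam i (fun j => P i j ω) : ℕ) : ℝ) * u ^ (tcBlock s T i))
          h1int h2int hch
        rw [integral_add ((hZint u h0 h1 i).const_mul _) hVint, integral_const_mul,
            integral_add (integrable_const _) (hVint.mul_const _), integral_const,
            integral_mul_const, hEV i] at hmono
        simp only [probReal_univ, smul_eq_mul, one_mul] at hmono
        unfold hpoly
        have htpos : (0:ℝ) < tcBlock s T i := by exact_mod_cast hpos
        nlinarith [hmono]
    have hio : ∀ v : ℕ, (1:ℝ)/((v:ℝ) + ((Finset.univ.sup s : ℕ) : ℝ))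
        = ∫ u in (0:ℝ)..1, u ^ (v + Finset.univ.sup s - 1) := by
      intro v
      rw [integral_pow, one_pow,
        zero_pow (by omega : v + Finset.univ.sup s - 1 + 1 ≠ 0)]
      have hc : ((v + Finset.univ.sup s - 1 : ℕ) : ℝ) + 1
          = (v:ℝ) + ((Finset.univ.sup s : ℕ) : ℝ) := by
        have h2 : v + Finset.univ.sup s - 1 + 1 = v + Finset.univ.sup s := by omega
        calc ((v + Finset.univ.sup s - 1 : ℕ) : ℝ) + 1
            = ((v + Finset.univ.sup s - 1 + 1 : ℕ) : ℝ) := by push_cast; ring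
          _ = _ := by rw [h2]; push_cast; ring
      rw [hc]
      norm_num
    calc ∑ p ∈ T, ∫ ω, 1 / nhat1 s lam (DUmod s T p.1 (fun i j => P i j ω)) ∂μ
        = ∑ p ∈ T, ((1-lam) * ∫ ω, 1/((Cfun s T lam P p.1 ω : ℝ)
            + ((Finset.univ.sup s : ℕ) : ℝ)) ∂μ) := by
          refine Finset.sum_congr rfl fun p _ => ?_
          rw [integral_congr_ae (Filter.Eventually.of_forall (hpt p.1)), integral_const_mul]
      _ = ∑ i, (tcBlock s T i : ℝ) * ((1-lam) * ∫ ω, 1/((Cfun s T lam P i ω : ℝ)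
            + ((Finset.univ.sup s : ℕ) : ℝ)) ∂μ) :=
          hgroup (fun i => (1-lam) * ∫ ω, 1/((Cfun s T lam P i ω : ℝ)
            + ((Finset.univ.sup s : ℕ) : ℝ)) ∂μ)
      _ ≤ ∑ i, (1-lam) * ((tcBlock s T i : ℝ) * (∫ u in (0:ℝ)..1,
            u^(tcBlock s T i - 1) * ∏ j ∈ Finset.univ.erase i, hpoly s T lam j u)) := by
          refine Finset.sum_le_sum fun i0 _ => ?_
          rcases Nat.eq_zero_or_pos (tcBlock s T i0) with hz | hpos
          · rw [hz]
            simp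
          · have hE1 : (∫ ω, 1/((Cfun s T lam P i0 ω : ℝ) + ((Finset.univ.sup s : ℕ) : ℝ)) ∂μ)
                ≤ ∫ u in (0:ℝ)..1, u ^ (tcBlock s T i0 - 1)
                    * ∏ j ∈ Finset.univ.erase i0, hpoly s T lam j u := by
              have hEexp := expect_nat_eq μ (Cfun s T lam P i0) (hC i0) (nTot s) (hCb i0)
                (fun v => 1/((v:ℝ) + ((Finset.univ.sup s : ℕ) : ℝ)))
              have hPhiexp : ∀ u : ℝ,
                  (∫ ω, u ^ (Cfun s T lam P i0 ω + Finset.univ.sup s - 1) ∂μ)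
                  = ∑ v ∈ Finset.range (nTot s + 1),
                      (μ (Cfun s T lam P i0 ⁻¹' {v})).toReal
                        * u ^ (v + Finset.univ.sup s - 1) :=
                fun u => expect_nat_eq μ (Cfun s T lam P i0) (hC i0) (nTot s) (hCb i0)
                  (fun v => u ^ (v + Finset.univ.sup s - 1))
              rw [hEexp]
              have hstep : ∑ v ∈ Finset.range (nTot s + 1),
                    (μ (Cfun s T lam P i0 ⁻¹' {v})).toReal
                      * (1/((v:ℝ) + ((Finset.univ.sup s : ℕ) : ℝ)))
                  = ∫ u in (0:ℝ)..1, ∑ v ∈ Finset.range (nTot s + 1),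
                      (μ (Cfun s T lam P i0 ⁻¹' {v})).toReal
                        * u ^ (v + Finset.univ.sup s - 1) := by
                simp only [hio]
                simp only [← intervalIntegral.integral_const_mul]
                exact (intervalIntegral.integral_finset_sum fun v _ =>
                  Continuous.intervalIntegrable
                    (continuous_const.mul (continuous_pow _)) _ _).symm
              rw [hstep]
              refine intervalIntegral.integral_mono_on zero_le_one ?_ ?_ ?_
              · exact Continuous.intervalIntegrable (continuous_finset_sum _ fun v _ =>
                  continuous_const.mul (continuous_pow _)) _ _
              · exact Continuous.intervalIntegrable ((continuous_pow _).mul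
                  (continuous_finset_prod _ fun j _ => hcont j)) _ _
              · intro u hu
                obtain ⟨h0u, h1u⟩ := hu
                rw [← hPhiexp u, hfac u h0u h1u i0]
                have hprodle : (∏ i ∈ Finset.univ.erase i0,
                      ∫ ω, u ^ Vsum s T lam i (fun j => P i j ω) ∂μ)
                    ≤ ∏ i ∈ Finset.univ.erase i0, hpoly s T lam i u :=
                  Finset.prod_le_prod
                    (fun i _ => integral_nonneg fun ω => pow_nonneg h0u _)
                    (fun i _ => hgb u h0u h1u i)
                have hprodnn : 0 ≤ ∏ i ∈ Finset.univ.erase i0, hpoly s T lam i u := by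
                  refine Finset.prod_nonneg fun i _ => ?_
                  unfold hpoly
                  exact add_nonneg hl0 (mul_nonneg h1l.le (pow_nonneg h0u _))
                have hpowle : u ^ (Finset.univ.sup s - 1) ≤ u ^ (tcBlock s T i0 - 1) :=
                  pow_le_pow_of_le_one h0u h1u (by have := htcs i0; omega)
                calc u ^ (Finset.univ.sup s - 1) * (∏ i ∈ Finset.univ.erase i0,
                      ∫ ω, u ^ Vsum s T lam i (fun j => P i j ω) ∂μ)
                    ≤ u ^ (Finset.univ.sup s - 1)
                        * ∏ i ∈ Finset.univ.erase i0, hpoly s T lam i u :=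
                      mul_le_mul_of_nonneg_left hprodle (pow_nonneg h0u _)
                  _ ≤ u ^ (tcBlock s T i0 - 1)
                        * ∏ i ∈ Finset.univ.erase i0, hpoly s T lam i u :=
                      mul_le_mul_of_nonneg_right hpowle hprodnn
            calc (tcBlock s T i0 : ℝ) * ((1-lam) * ∫ ω, 1/((Cfun s T lam P i0 ω : ℝ)
                  + ((Finset.univ.sup s : ℕ) : ℝ)) ∂μ)
                = (1-lam) * ((tcBlock s T i0 : ℝ) * ∫ ω, 1/((Cfun s T lam P i0 ω : ℝ)
                  + ((Finset.univ.sup s : ℕ) : ℝ)) ∂μ) := by ring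
              _ ≤ (1-lam) * ((tcBlock s T i0 : ℝ) * (∫ u in (0:ℝ)..1,
                    u ^ (tcBlock s T i0 - 1)
                      * ∏ j ∈ Finset.univ.erase i0, hpoly s T lam j u)) :=
                  mul_le_mul_of_nonneg_left
                    (mul_le_mul_of_nonneg_left hE1 (Nat.cast_nonneg _)) h1l.le
      _ = ∫ u in (0:ℝ)..1, (∑ i, (∏ j ∈ Finset.univ.erase i, hpoly s T lam j u)
            * ((1-lam) * ((tcBlock s T i : ℝ) * u^(tcBlock s T i - 1)))) := by
          have heq : ∀ i : Fin b, (1-lam) * ((tcBlock s T i : ℝ) * (∫ u in (0:ℝ)..1,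
              u^(tcBlock s T i - 1) * ∏ j ∈ Finset.univ.erase i, hpoly s T lam j u))
              = ∫ u in (0:ℝ)..1, (∏ j ∈ Finset.univ.erase i, hpoly s T lam j u)
                * ((1-lam) * ((tcBlock s T i : ℝ) * u^(tcBlock s T i - 1))) := by
            intro i
            rw [← intervalIntegral.integral_const_mul, ← intervalIntegral.integral_const_mul]
            refine intervalIntegral.integral_congr fun u _ => ?_
            ring
          rw [Finset.sum_congr rfl (fun i _ => heq i)]
          refine (intervalIntegral.integral_finset_sum fun i _ => ?_).symm
          refine Continuous.intervalIntegrable ?_ _ _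
          exact (continuous_finset_prod _ fun j _ => hcont j).mul
            (continuous_const.mul (continuous_const.mul (continuous_pow _)))
      _ = ∏ i, hpoly s T lam i 1 - ∏ i, hpoly s T lam i 0 := by
          refine intervalIntegral.integral_eq_sub_of_hasDerivAt
            (f := fun u => ∏ i, hpoly s T lam i u) ?_ ?_
          · intro u _
            have hd : ∀ i ∈ Finset.univ, HasDerivAt (fun u => hpoly s T lam i u)
                ((1-lam) * ((tcBlock s T i : ℝ) * u^(tcBlock s T i - 1))) u := by
              intro i _
              unfold hpoly
              exact ((hasDerivAt_pow _ u).const_mul (1-lam)).const_add lam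
            have hprod := HasDerivAt.fun_finsetProd hd
            simpa [smul_eq_mul] using hprod
          · refine Continuous.intervalIntegrable ?_ _ _
            refine continuous_finset_sum _ fun i _ => Continuous.mul ?_ ?_
            · refine continuous_finset_prod _ fun j _ => ?_
              unfold hpoly
              exact continuous_const.add (continuous_const.mul (continuous_pow _))
            · exact continuous_const.mul (continuous_const.mul (continuous_pow _))
      _ ≤ 1 := by
          have h1 : ∏ i, hpoly s T lam i 1 = 1 := by
            refine Finset.prod_eq_one fun i _ => ?_
            unfold hpoly
            rw [one_pow]; ring
          have h0 : 0 ≤ ∏ i, hpoly s T lam i 0 := by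
            refine Finset.prod_nonneg fun i _ => ?_
            unfold hpoly
            rcases Nat.eq_zero_or_pos (tcBlock s T i) with h | h
            · rw [h, pow_zero]; linarith
            · rw [zero_pow (Nat.pos_iff_ne_zero.1 h)]; linarith
          linarith
end

section
/- Under Assumption 1 (block dependence, with arbitrary dependence within each block) and with every true-null p-value uniformly distributed on [0,1], the adaptive Bonferroni method — which rejects H_{ij} if and only if P_{ij} ≤ α/n̂₀(P), where n̂₀ is nondecreasing in each p-value and satisfies Property 1 — has FWER at most α for every configuration of true and false null hypotheses. -/
open MeasureTheory ProbabilityTheory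

/-- Key probabilistic estimate: if `X` is uniform on `[0,1]` and independent of `N`,
then `μ {X ≤ α / N} ≤ ∫⁻ ofReal (α / N)`. -/
lemma key_bound {Ω : Type} [MeasurableSpace Ω] (μ : Measure Ω) [IsProbabilityMeasure μ]
    (X N : Ω → ℝ) (hX : Measurable X) (hN : Measurable N)
    (hind : IndepFun N X μ)
    (hmap : μ.map X = volume.restrict (Set.Icc (0:ℝ) 1)) :
    μ {ω | X ω ≤ α / N ω} ≤ ∫⁻ ω, ENNReal.ofReal (α / N ω) ∂μ := by
  have hC : MeasurableSet {q : ℝ × ℝ | q.2 ≤ α / q.1} :=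
    measurableSet_le measurable_snd (measurable_const.div measurable_fst)
  have hpair : Measurable (fun ω => (N ω, X ω)) := hN.prodMk hX
  have h1 : μ {ω | X ω ≤ α / N ω}
      = (μ.map (fun ω => (N ω, X ω))) {q : ℝ × ℝ | q.2 ≤ α / q.1} := by
    rw [Measure.map_apply hpair hC]; rfl
  rw [h1, (indepFun_iff_map_prod_eq_prod_map_map hN.aemeasurable hX.aemeasurable).mp hind]
  have hsf : SFinite (μ.map X) := by rw [hmap]; infer_instance
  rw [Measure.prod_apply hC]
  have hslice : ∀ y : ℝ, (μ.map X) (Prod.mk y ⁻¹' {q : ℝ × ℝ | q.2 ≤ α / q.1})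
      ≤ ENNReal.ofReal (α / y) := by
    intro y
    have : Prod.mk y ⁻¹' {q : ℝ × ℝ | q.2 ≤ α / q.1} = Set.Iic (α / y) := rfl
    rw [this, hmap, Measure.restrict_apply measurableSet_Iic]
    calc volume (Set.Iic (α / y) ∩ Set.Icc (0:ℝ) 1)
        ≤ volume (Set.Icc (0:ℝ) (α / y)) := by
          apply measure_mono
          rintro x ⟨hx1, hx2, _⟩
          exact ⟨hx2, hx1⟩
      _ = ENNReal.ofReal (α / y) := by rw [Real.volume_Icc, sub_zero]
  calc ∫⁻ y, (μ.map X) (Prod.mk y ⁻¹' {q : ℝ × ℝ | q.2 ≤ α / q.1}) ∂(μ.map N)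
      ≤ ∫⁻ y, ENNReal.ofReal (α / y) ∂(μ.map N) := lintegral_mono fun y => hslice y
    _ = ∫⁻ ω, ENNReal.ofReal (α / N ω) ∂μ := by
        exact lintegral_map (ENNReal.measurable_ofReal.comp
          (measurable_const.div measurable_id)) hN

theorem stmt4 {Ω : Type} [MeasurableSpace Ω] (μ : Measure Ω) [IsProbabilityMeasure μ]
    {b : ℕ} (hb : 0 < b) (s : Fin b → ℕ) (hs : ∀ i, 0 < s i)
    (P : ∀ i : Fin b, Fin (s i) → Ω → ℝ)
    (hmeas : ∀ i j, Measurable (P i j))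
    (hrange : ∀ i j ω, P i j ω ∈ Set.Icc (0:ℝ) 1)
    (T : Finset ((i : Fin b) × Fin (s i)))
    -- Assumption 1: block dependence (the blocks are mutually independent),
    -- with arbitrary dependence within each block
    (hindep : iIndepFun (fun i ω => fun j => P i j ω) μ)
    -- true null p-values are uniform on [0,1]
    (hunif : ∀ p ∈ T, μ.map (P p.1 p.2) = volume.restrict (Set.Icc (0:ℝ) 1))
    -- the estimator of the number of true nulls, with Property 1
    (nhat : (∀ i : Fin b, Fin (s i) → ℝ) → ℝ)
    (hnhat_meas : Measurable nhat)
    (hnhat_mono : Monotone nhat)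
    (hnhat_pos : ∀ x, 0 < nhat x)
    (hProp1 : ∑ p ∈ T, ∫ ω, 1 / nhat (DUmod s T p.1 (fun i j => P i j ω)) ∂μ ≤ 1)
    (α : ℝ) (hα : 0 ≤ α) :
    -- FWER of the adaptive Bonferroni method, which rejects `H p` iff
    -- `P p ≤ α / n̂₀(P)`, is at most `α`
    μ {ω | ∃ p ∈ T, P p.1 p.2 ω ≤ α / nhat (fun i j => P i j ω)}
      ≤ ENNReal.ofReal α := by
  classical
  -- the Dirac-uniform modified estimator, per hypothesis p
  set N : ((i : Fin b) × Fin (s i)) → Ω → ℝ :=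
    fun p ω => nhat (DUmod s T p.1 (fun i j => P i j ω)) with hNdef
  -- measurability of DUmod as a function of x
  have hDUmeas : ∀ i0 : Fin b, Measurable (DUmod s T i0) := by
    intro i0
    apply measurable_pi_lambda
    intro i
    apply measurable_pi_lambda
    intro j
    by_cases hc : i = i0 ∨ (⟨i, j⟩ : (i : Fin b) × Fin (s i)) ∉ T
    · simp only [DUmod, hc, if_true]; exact measurable_const
    · simp only [DUmod, hc, if_false]
      exact (measurable_pi_apply j).comp (measurable_pi_apply i)
  have hParr : Measurable (fun ω => (fun i j => P i j ω : ∀ i, Fin (s i) → ℝ)) :=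
    measurable_pi_lambda _ fun i => measurable_pi_lambda _ fun j => hmeas i j
  have hNmeas : ∀ p, Measurable (N p) :=
    fun p => hnhat_meas.comp ((hDUmeas p.1).comp hParr)
  -- DUmod ≤ identity (pointwise), so N p ≤ nhat ∘ P
  have hDUle : ∀ (i0 : Fin b) (x : ∀ i, Fin (s i) → ℝ),
      (∀ i j, 0 ≤ x i j) → DUmod s T i0 x ≤ x := by
    intro i0 x hx i j
    unfold DUmod
    split
    · exact hx i j
    · exact le_refl _
  -- step 1: the FWER event is contained in a union of simpler events
  have hsub : {ω | ∃ p ∈ T, P p.1 p.2 ω ≤ α / nhat (fun i j => P i j ω)}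
      ⊆ ⋃ p ∈ T, {ω | P p.1 p.2 ω ≤ α / N p ω} := by
    rintro ω ⟨p, hpT, hp⟩
    refine Set.mem_biUnion hpT ?_
    have hle : N p ω ≤ nhat (fun i j => P i j ω) :=
      hnhat_mono (hDUle p.1 _ fun i j => (hrange i j ω).1)
    have : α / nhat (fun i j => P i j ω) ≤ α / N p ω :=
      div_le_div_of_nonneg_left hα (hnhat_pos _) hle
    exact le_trans hp this
  -- step 2: independence of N p and P p
  have hind : ∀ p ∈ T, IndepFun (N p) (P p.1 p.2) μ := by
    intro p _
    set S : Finset (Fin b) := {p.1}ᶜ with hSdef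
    set S' : Finset (Fin b) := {p.1} with hS'def
    have hd : Disjoint S S' := disjoint_compl_left
    have hbase := hindep.indepFun_finset S S' hd
      (fun i => measurable_pi_lambda _ fun j => hmeas i j)
    set φ : (∀ i : S, Fin (s i) → ℝ) → ℝ :=
      fun g => nhat (DUmod s T p.1
        (fun i j => if h : i ∈ S then g ⟨i, h⟩ j else 0)) with hφdef
    set ψ : (∀ i : S', Fin (s i) → ℝ) → ℝ :=
      fun h => h ⟨p.1, Finset.mem_singleton_self _⟩ p.2 with hψdef
    have hφm : Measurable φ := by
      apply hnhat_meas.comp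
      apply (hDUmeas p.1).comp
      apply measurable_pi_lambda
      intro i
      apply measurable_pi_lambda
      intro j
      by_cases h : i ∈ S
      · simp only [h, dif_pos]
        exact (measurable_pi_apply j).comp (measurable_pi_apply (⟨i, h⟩ : S))
      · simp only [h, dif_neg, not_false_iff]
        exact measurable_const
    have hψm : Measurable ψ :=
      (measurable_pi_apply p.2).comp
        (measurable_pi_apply (⟨p.1, Finset.mem_singleton_self _⟩ : S'))
    have hcomp := hbase.comp hφm hψm
    have h1 : (φ ∘ fun a (i : S) => (fun j => P i j a)) = N p := by
      funext ω
      simp only [Function.comp_apply, hφdef, hNdef]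
      congr 1
      funext i j
      by_cases hc : i = p.1 ∨ (⟨i, j⟩ : (i : Fin b) × Fin (s i)) ∉ T
      · simp only [DUmod, hc, if_true]
      · push_neg at hc
        have hiS : i ∈ S := by
          rw [hSdef, Finset.mem_compl, Finset.mem_singleton]
          exact hc.1
        have hnot : ¬(i = p.1 ∨ (⟨i, j⟩ : (i : Fin b) × Fin (s i)) ∉ T) := by
          push_neg; exact hc
        simp only [DUmod, hnot, if_false, hiS, dif_pos]
    have h2 : (ψ ∘ fun a (i : S') => (fun j => P i j a)) = P p.1 p.2 := by
      funext ω; rfl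
    rwa [h1, h2] at hcomp
  -- step 3: pointwise bound N p ≥ nhat 0 > 0, for integrability
  have hNlb : ∀ p ω, nhat (fun _ _ => 0) ≤ N p ω := by
    intro p ω
    apply hnhat_mono
    intro i j
    unfold DUmod
    split
    · exact le_refl _
    · exact (hrange i j ω).1
  have hint : ∀ p, Integrable (fun ω => α / N p ω) μ := by
    intro p
    refine ⟨((measurable_const.div (hNmeas p))).aestronglyMeasurable, ?_⟩
    apply HasFiniteIntegral.of_bounded (C := α / nhat (fun _ _ => 0))
    filter_upwards with ω
    rw [Real.norm_eq_abs, abs_of_nonneg (div_nonneg hα (hnhat_pos _).le)]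
    exact div_le_div_of_nonneg_left hα (hnhat_pos _) (hNlb p ω)
  -- put everything together
  calc μ {ω | ∃ p ∈ T, P p.1 p.2 ω ≤ α / nhat (fun i j => P i j ω)}
      ≤ μ (⋃ p ∈ T, {ω | P p.1 p.2 ω ≤ α / N p ω}) := measure_mono hsub
    _ ≤ ∑ p ∈ T, μ {ω | P p.1 p.2 ω ≤ α / N p ω} := measure_biUnion_finset_le T _
    _ ≤ ∑ p ∈ T, ∫⁻ ω, ENNReal.ofReal (α / N p ω) ∂μ := by
        apply Finset.sum_le_sum
        intro p hp
        exact key_bound μ (P p.1 p.2) (N p) (hmeas p.1 p.2) (hNmeas p)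
          (hind p hp) (hunif p hp)
    _ = ∑ p ∈ T, ENNReal.ofReal (∫ ω, α / N p ω ∂μ) := by
        apply Finset.sum_congr rfl
        intro p _
        rw [ofReal_integral_eq_lintegral_ofReal (hint p)]
        filter_upwards with ω
        exact div_nonneg hα (hnhat_pos _).le
    _ = ENNReal.ofReal (∑ p ∈ T, ∫ ω, α / N p ω ∂μ) := by
        rw [ENNReal.ofReal_sum_of_nonneg]
        intro p _
        exact integral_nonneg fun ω => div_nonneg hα (hnhat_pos _).le
    _ ≤ ENNReal.ofReal α := by
        apply ENNReal.ofReal_le_ofReal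
        have : ∀ p ∈ T, ∫ ω, α / N p ω ∂μ
            = α * ∫ ω, 1 / N p ω ∂μ := by
          intro p _
          rw [← integral_const_mul]
          congr 1
          funext ω
          rw [mul_one_div]
        rw [Finset.sum_congr rfl this, ← Finset.mul_sum]
        calc α * ∑ p ∈ T, ∫ ω, 1 / N p ω ∂μ
            ≤ α * 1 := mul_le_mul_of_nonneg_left hProp1 hα
          _ = α := mul_one α
end

section
/- Given a p × q matrix A = ((a_{ij})) with each a_{ij} ∈ {0,1} and Σ_{i=1}^p Σ_{j=1}^q a_{ij} = m, there exist permutations σ_1, …, σ_p of {1,…,q} such that the matrix B with entries b_{ij} = a_{i,σ_i(j)} satisfies, for every j = 1,…,q, Σ_{i=1}^p b_{ij} = ⌊m/q⌋ or ⌊m/q⌋ + 1, and Σ_{i=1}^p Σ_{j=1}^q b_{ij} = m. -/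
open Finset

lemma count_lb (q j m : ℕ) (hq : 0 < q) (hj : j < q) :
    m / q ≤ ((Finset.range m).filter (fun t => t % q = j)).card := by
  have key : (Finset.range (m / q)).card ≤
      ((Finset.range m).filter (fun t => t % q = j)).card := by
    apply Finset.card_le_card_of_injOn (fun l => j + q * l)
    · intro l hl
      simp only [Finset.mem_coe, Finset.mem_range] at hl
      simp only [Finset.mem_coe, Finset.mem_filter, Finset.mem_range]
      refine ⟨?_, ?_⟩
      · calc j + q * l < q + q * l := by omega
          _ = q * (l + 1) := by ring
          _ ≤ q * (m / q) := Nat.mul_le_mul_left q hl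
          _ ≤ m := Nat.mul_div_le m q
      · simp [Nat.add_mul_mod_self_left, Nat.mod_eq_of_lt hj]
    · intro a _ b _ h
      simp only at h
      have : q * a = q * b := by omega
      exact Nat.eq_of_mul_eq_mul_left hq this
  simpa using key

lemma count_ub (q j m : ℕ) (hq : 0 < q) (hj : j < q) :
    ((Finset.range m).filter (fun t => t % q = j)).card ≤ m / q + 1 := by
  have key : ((Finset.range m).filter (fun t => t % q = j)).card ≤
      (Finset.range (m / q + 1)).card := by
    apply Finset.card_le_card_of_injOn (fun t => t / q)
    · intro t ht
      simp only [Finset.mem_coe, Finset.mem_filter, Finset.mem_range] at ht ⊢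
      have := Nat.div_le_div_right (c := q) (Nat.le_of_lt ht.1)
      omega
    · intro a ha b hb h
      simp only [Finset.coe_filter, Set.mem_setOf_eq, Finset.mem_range] at ha hb
      simp only at h
      have h1 := Nat.div_add_mod a q
      have h2 := Nat.div_add_mod b q
      rw [h] at h1
      rw [ha.2] at h1
      rw [hb.2] at h2
      omega
  simpa using key
open Finset

lemma window (q : ℕ) (s k j d : ℕ) (hk : k ≤ q) (hd : d < q)
    (hmod : (s + d) % q = j) :
    ((Finset.Ico s (s + k)).filter (fun t => t % q = j)).card
      = if d < k then 1 else 0 := by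
  have uniq : ∀ t, t ∈ Finset.Ico s (s + k) → t % q = j → t = s + d := by
    intro t ht hmt
    simp only [Finset.mem_Ico] at ht
    obtain ⟨h1, h2⟩ := ht
    set r := t - s with hr
    have htr : t = s + r := by omega
    have hrk : r < k := by omega
    have hme : r ≡ d [MOD q] := by
      apply Nat.ModEq.add_left_cancel' s
      show (s + r) % q = (s + d) % q
      rw [← htr, hmt, hmod]
    have : r % q = d % q := hme
    rw [Nat.mod_eq_of_lt (lt_of_lt_of_le hrk hk), Nat.mod_eq_of_lt hd] at this
    omega
  by_cases h : d < k
  · rw [if_pos h]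
    have : (Finset.Ico s (s + k)).filter (fun t => t % q = j) = {s + d} := by
      apply Finset.eq_singleton_iff_unique_mem.mpr
      refine ⟨?_, ?_⟩
      · simp only [Finset.mem_filter, Finset.mem_Ico]
        exact ⟨⟨by omega, by omega⟩, hmod⟩
      · intro t ht
        simp only [Finset.mem_filter] at ht
        exact uniq t ht.1 ht.2
    rw [this, Finset.card_singleton]
  · rw [if_neg h]
    have : (Finset.Ico s (s + k)).filter (fun t => t % q = j) = ∅ := by
      apply Finset.filter_eq_empty_iff.mpr
      intro t ht hmt
      have := uniq t ht hmt
      simp only [Finset.mem_Ico] at ht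
      omega
    rw [this, Finset.card_empty]
open Finset

lemma exists_sortperm (q k : ℕ) (hkq : k ≤ q) (f : Fin q → ℕ)
    (hf : ∀ x, f x = 0 ∨ f x = 1) (hk : ∑ x, f x = k) :
    ∃ π : Equiv.Perm (Fin q), ∀ x : Fin q,
      f (π x) = if (x : ℕ) < k then 1 else 0 := by
  classical
  have e1 : {x : Fin q // (x : ℕ) < k} ≃ Fin k :=
    { toFun := fun x => ⟨x.1.1, x.2⟩
      invFun := fun y => ⟨⟨y.1, lt_of_lt_of_le y.2 hkq⟩, y.2⟩
      left_inv := fun _ => rfl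
      right_inv := fun _ => rfl }
  have hcard1 : Fintype.card {x : Fin q // (x : ℕ) < k} = k := by
    rw [Fintype.card_congr e1, Fintype.card_fin]
  have hcard2 : Fintype.card {x : Fin q // f x = 1} = k := by
    rw [Fintype.card_subtype, Finset.card_filter, ← hk]
    apply Finset.sum_congr rfl
    intro x _
    rcases hf x with h | h <;> simp [h]
  have hc : Fintype.card {x : Fin q // (x : ℕ) < k}
      = Fintype.card {x : Fin q // f x = 1} := by rw [hcard1, hcard2]
  have hcc : Fintype.card {x : Fin q // ¬ ((x : ℕ) < k)}
      = Fintype.card {x : Fin q // ¬ (f x = 1)} := by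
    rw [Fintype.card_subtype_compl, Fintype.card_subtype_compl, hc]
  refine ⟨Equiv.subtypeCongr (Fintype.equivOfCardEq hc) (Fintype.equivOfCardEq hcc), ?_⟩
  intro x
  by_cases h : (x : ℕ) < k
  · rw [if_pos h]
    have : Equiv.subtypeCongr (Fintype.equivOfCardEq hc) (Fintype.equivOfCardEq hcc) x
        = ((Fintype.equivOfCardEq hc) ⟨x, h⟩ : {x : Fin q // f x = 1}).1 := by
      simp [Equiv.subtypeCongr, h]
    rw [this]
    exact ((Fintype.equivOfCardEq hc) ⟨x, h⟩).2
  · rw [if_neg h]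
    have : Equiv.subtypeCongr (Fintype.equivOfCardEq hc) (Fintype.equivOfCardEq hcc) x
        = ((Fintype.equivOfCardEq hcc) ⟨x, h⟩ : {x : Fin q // ¬ (f x = 1)}).1 := by
      simp [Equiv.subtypeCongr, h]
    rw [this]
    rcases hf (((Fintype.equivOfCardEq hcc) ⟨x, h⟩ : {x : Fin q // ¬ (f x = 1)}).1) with h2 | h2
    · exact h2
    · exact absurd h2 ((Fintype.equivOfCardEq hcc) ⟨x, h⟩).2

lemma range_split (P : ℕ → Prop) [DecidablePred P] (a b : ℕ) (h : a ≤ b) :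
    ((Finset.range b).filter P).card
      = ((Finset.range a).filter P).card + ((Finset.Ico a b).filter P).card := by
  rw [Finset.range_eq_Ico,
    ← Finset.Ico_union_Ico_eq_Ico (Nat.zero_le a) h, Finset.filter_union,
    Finset.card_union_of_disjoint
      (Finset.disjoint_filter_filter (Finset.Ico_disjoint_Ico_consecutive _ _ _)), Finset.range_eq_Ico]

lemma partition_count (k' : ℕ → ℕ) (P : ℕ → Prop) [DecidablePred P] (n : ℕ) :
    ∑ i ∈ Finset.range n,
      ((Finset.Ico (∑ t ∈ Finset.range i, k' t)
        ((∑ t ∈ Finset.range i, k' t) + k' i)).filter P).card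
      = ((Finset.range (∑ t ∈ Finset.range n, k' t)).filter P).card := by
  induction n with
  | zero => simp
  | succ n ih =>
    rw [Finset.sum_range_succ, ih, Finset.sum_range_succ (f := k'),
      range_split P _ _ (Nat.le_add_right _ (k' n))]

open Fin.NatCast

theorem stmt6 (p q : ℕ) (hp : 0 < p) (hq : 0 < q)
    (A : Fin p → Fin q → ℕ) (hA : ∀ i j, A i j = 0 ∨ A i j = 1)
    (m : ℕ) (hm : ∑ i, ∑ j, A i j = m) :
    ∃ σ : Fin p → Equiv.Perm (Fin q),
      (∀ j, (∑ i, A i (σ i j)) = m / q ∨ (∑ i, A i (σ i j)) = m / q + 1) ∧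
      ∑ i, ∑ j, A i (σ i j) = m := by
  classical
  haveI : NeZero q := ⟨hq.ne'⟩
  set K : Fin p → ℕ := fun i => ∑ j, A i j with hK
  have hKq : ∀ i, K i ≤ q := by
    intro i
    calc K i ≤ ∑ _j : Fin q, 1 :=
          Finset.sum_le_sum (fun j _ => by rcases hA i j with h | h <;> omega)
      _ = q := by simp
  set k' : ℕ → ℕ := fun n => if h : n < p then K ⟨n, h⟩ else 0 with hk'
  set s : ℕ → ℕ := fun n => ∑ t ∈ Finset.range n, k' t with hs
  have hk'val : ∀ i : Fin p, k' (i : ℕ) = K i := by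
    intro i; simp [hk', i.is_lt]
  have hsp : s p = m := by
    rw [hs, ← hm]
    simp only
    rw [← Fin.sum_univ_eq_sum_range k' p]
    apply Finset.sum_congr rfl
    intro i _
    rw [hk'val i]
  choose π hπ using fun i : Fin p => exists_sortperm q (K i) (hKq i) (A i) (hA i) rfl
  set σ : Fin p → Equiv.Perm (Fin q) := fun i =>
    (Equiv.subRight ((s (i : ℕ) : ℕ) : Fin q)).trans (π i) with hσ
  have hrow : ∀ (i : Fin p) (j : Fin q), A i (σ i j)
      = if ((j - ((s (i : ℕ) : ℕ) : Fin q)) : Fin q).1 < K i then 1 else 0 := by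
    intro i j
    exact hπ i _
  have hkey : ∀ (i : Fin p) (j : Fin q),
      (s (i : ℕ) + ((j - ((s (i : ℕ) : ℕ) : Fin q)) : Fin q).1) % q = (j : ℕ) := by
    intro i j
    set c : Fin q := ((s (i : ℕ) : ℕ) : Fin q) with hc
    have h1 : ((j - c) + c : Fin q) = j := sub_add_cancel j c
    have h2 : (((j - c) + c : Fin q) : ℕ)
        = (((j - c : Fin q) : ℕ) + (c : ℕ)) % q := Fin.val_add _ _
    have h3 : (c : ℕ) = s (i : ℕ) % q := Fin.val_natCast _ _
    rw [h1, h3] at h2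
    rw [h2, Nat.add_mod_mod, Nat.add_comm]
  refine ⟨σ, ?_, ?_⟩
  · intro j
    have step1 : ∀ i : Fin p, A i (σ i j)
        = ((Finset.Ico (s (i : ℕ)) (s (i : ℕ) + K i)).filter
            (fun t => t % q = (j : ℕ))).card := by
      intro i
      rw [hrow i j, window q (s (i : ℕ)) (K i) (j : ℕ) _ (hKq i) (Fin.is_lt _) (hkey i j)]
    have hcol : ∑ i, A i (σ i j)
        = ((Finset.range m).filter (fun t => t % q = (j : ℕ))).card := by
      rw [Finset.sum_congr rfl (fun i _ => step1 i)]
      have conv1 : ∑ i : Fin p, ((Finset.Ico (s (i : ℕ)) (s (i : ℕ) + K i)).filter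
            (fun t => t % q = (j : ℕ))).card
          = ∑ n ∈ Finset.range p, ((Finset.Ico (s n) (s n + k' n)).filter
            (fun t => t % q = (j : ℕ))).card := by
        rw [← Fin.sum_univ_eq_sum_range
          (fun n => ((Finset.Ico (s n) (s n + k' n)).filter
            (fun t => t % q = (j : ℕ))).card) p]
        apply Finset.sum_congr rfl
        intro i _
        rw [hk'val i]
      rw [conv1, ← hsp]
      simp only [hs]
      exact partition_count k' (fun t => t % q = (j : ℕ)) p
    rw [hcol]
    have lb := count_lb q (j : ℕ) m hq j.is_lt
    have ub := count_ub q (j : ℕ) m hq j.is_lt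
    omega
  · rw [← hm]
    apply Finset.sum_congr rfl
    intro i _
    exact Equiv.sum_comp (σ i) (A i)
end

section
/- The function f(x) = (2x+3)^{−2/(x+2)} of a real variable x ≥ 0 is increasing on [1, ∞), and satisfies f(x) ≤ f(1) for all 0 ≤ x ≤ 1. -/
open Real Set

private lemma log5_gt : (3:ℝ)/2 < Real.log 5 := by
  rw [Real.lt_log_iff_exp_lt (by norm_num : (0:ℝ) < 5)]
  have h1 : Real.exp 1 < 2.7182818286 := Real.exp_one_lt_d9
  have h3 : Real.exp 3 = (Real.exp 1) ^ (3:ℕ) := by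
    rw [← Real.exp_nat_mul]; norm_num
  have h3' : Real.exp 3 < 25 := by
    rw [h3]
    calc (Real.exp 1)^(3:ℕ) < 2.7182818286 ^ (3:ℕ) := by
          exact pow_lt_pow_left₀ h1 (Real.exp_pos 1).le (by norm_num)
      _ < 25 := by norm_num
  have hsq : Real.exp (3/2) * Real.exp (3/2) = Real.exp 3 := by
    rw [← Real.exp_add]; norm_num
  nlinarith [Real.exp_pos (3/2)]

private noncomputable def g (x : ℝ) : ℝ := Real.log (2 * x + 3) * (-2 / (x + 2))

private lemma hasDerivG {x : ℝ} (hx : 0 < x) :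
    HasDerivAt g (2 / (2*x+3) * (-2/(x+2)) + Real.log (2*x+3) * (2/(x+2)^2)) x := by
  have h23 : (0:ℝ) < 2*x+3 := by linarith
  have hx2 : (0:ℝ) < x+2 := by linarith
  have h1 : HasDerivAt (fun y : ℝ => 2*y+3) 2 x := by
    simpa using ((hasDerivAt_id x).const_mul 2).add_const 3
  have h2 : HasDerivAt (fun y : ℝ => Real.log (2*y+3)) (2/(2*x+3)) x := by
    simpa [div_eq_mul_inv] using h1.log h23.ne'
  have h3 : HasDerivAt (fun y : ℝ => y+2) 1 x := (hasDerivAt_id x).add_const 2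
  have h4 : HasDerivAt (fun y : ℝ => (y+2)⁻¹) (-1/(x+2)^2) x := by
    simpa [Pi.inv_def] using h3.inv hx2.ne'
  have h5 : HasDerivAt (fun y : ℝ => -2/(y+2)) (2/(x+2)^2) x := by
    have := h4.const_mul (-2)
    have he : (-2 : ℝ) * (-1/(x+2)^2) = 2/(x+2)^2 := by ring
    simpa [div_eq_mul_inv, he] using this
  exact h2.mul h5

private lemma gmono : StrictMonoOn g (Set.Ici (1:ℝ)) := by
  apply strictMonoOn_of_deriv_pos (convex_Ici 1)
  · apply ContinuousOn.mul
    · apply ContinuousOn.log (by fun_prop)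
      intro x hx
      simp only [Set.mem_Ici] at hx
      nlinarith
    · apply ContinuousOn.div continuousOn_const (by fun_prop)
      intro x hx
      simp only [Set.mem_Ici] at hx
      nlinarith
  · intro x hx
    rw [interior_Ici] at hx
    simp only [Set.mem_Ioi] at hx
    have hx0 : (0:ℝ) < x := by linarith
    rw [(hasDerivG hx0).deriv]
    have h23 : (0:ℝ) < 2*x+3 := by linarith
    have hx2 : (0:ℝ) < x+2 := by linarith
    have hL : (3:ℝ)/2 ≤ Real.log (2*x+3) := by
      have : Real.log 5 ≤ Real.log (2*x+3) :=
        Real.log_le_log (by norm_num) (by linarith)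
      linarith [log5_gt]
    have heq : 2 / (2*x+3) * (-2/(x+2)) + Real.log (2*x+3) * (2/(x+2)^2)
        = (2 * Real.log (2*x+3) * (2*x+3) - 4*(x+2)) / ((x+2)^2 * (2*x+3)) := by
      field_simp
      ring
    rw [heq]
    apply div_pos
    · nlinarith
    · positivity

theorem stmt8 :
    let f : ℝ → ℝ := fun x => (2 * x + 3) ^ (-2 / (x + 2))
    StrictMonoOn f (Set.Ici (1 : ℝ)) ∧ ∀ x ∈ Set.Icc (0 : ℝ) 1, f x ≤ f 1 := by
  intro f
  have hfeq : ∀ x : ℝ, 0 ≤ x → f x = Real.exp (g x) := by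
    intro x hx
    have h23 : (0:ℝ) < 2*x+3 := by linarith
    simp only [f, g]
    rw [Real.rpow_def_of_pos h23]
  constructor
  · intro x hx y hy hxy
    simp only [Set.mem_Ici] at hx hy
    rw [hfeq x (by linarith), hfeq y (by linarith)]
    exact Real.exp_lt_exp.2 (gmono hx hy hxy)
  · intro x hx
    obtain ⟨hx0, hx1⟩ := hx
    rw [hfeq x hx0, hfeq 1 (by norm_num)]
    apply Real.exp_le_exp.2
    -- chord inequality for log on [3,5]
    have chord : (1-x) * Real.log 3 + x * Real.log 5 ≤ Real.log (2*x+3) := by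
      have h := (strictConcaveOn_log_Ioi.concaveOn).2 (Set.mem_Ioi.2 (by norm_num : (0:ℝ) < 3))
        (Set.mem_Ioi.2 (by norm_num : (0:ℝ) < 5)) (by linarith : (0:ℝ) ≤ 1 - x) hx0
        (by ring : (1-x) + x = 1)
      simpa [smul_eq_mul, show (1-x)*3 + x*5 = 2*x+3 by ring] using h
    have h2725 : Real.log 25 ≤ Real.log 27 := Real.log_le_log (by norm_num) (by norm_num)
    have h25 : Real.log 25 = 2 * Real.log 5 := by
      rw [show (25:ℝ) = 5^(2:ℕ) by norm_num, Real.log_pow]; norm_num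
    have h27 : Real.log 27 = 3 * Real.log 3 := by
      rw [show (27:ℝ) = 3^(3:ℕ) by norm_num, Real.log_pow]; norm_num
    have key : (x+2) * Real.log 5 ≤ 3 * Real.log (2*x+3) := by
      nlinarith
    -- g x ≤ g 1
    simp only [g]
    have hx2 : (0:ℝ) < x+2 := by linarith
    have h1 : Real.log (2*1+3) = Real.log 5 := by norm_num
    rw [h1]
    rw [show Real.log (2*x+3) * (-2/(x+2)) = (-(2*Real.log (2*x+3)))/(x+2) by ring,
        show Real.log 5 * (-2/(1+2)) = (-(2*Real.log 5))/3 by ring,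
        div_le_div_iff₀ hx2 (by norm_num : (0:ℝ) < 3)]
    nlinarith
end

section
/- Let s be a positive integer, a ≥ 0 an integer, β ∈ [0,1), λ ∈ [0,1], and let n₀ > 0 be a real number with n₀ ≤ (a + β + 1)s. Then (1/s)·[ (1−β)(1 − λ^{a+1})/(a+1) + β(1 − λ^{a+2})/(a+2) ] ≤ (1/n₀)·[ 1 + β(1−β)/((a+1)(a+2)) ]·(1 − λ^{a+2}) ≤ (1/n₀)·[ 1 + 1/(4(a+1)(a+2)) ]·(1 − λ^{a+2}). -/
theorem stmt11 (s : ℕ) (hs : 0 < s) (a : ℕ) (β l n₀ : ℝ)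
    (hβ : β ∈ Set.Ico (0 : ℝ) 1) (hl : l ∈ Set.Icc (0 : ℝ) 1)
    (hn₀ : 0 < n₀) (hn₀' : n₀ ≤ ((a : ℝ) + β + 1) * (s : ℝ)) :
    (1 / (s : ℝ)) * ((1 - β) * (1 - l ^ (a + 1)) / ((a : ℝ) + 1)
        + β * (1 - l ^ (a + 2)) / ((a : ℝ) + 2))
      ≤ (1 / n₀) * (1 + β * (1 - β) / (((a : ℝ) + 1) * ((a : ℝ) + 2))) * (1 - l ^ (a + 2)) ∧
    (1 / n₀) * (1 + β * (1 - β) / (((a : ℝ) + 1) * ((a : ℝ) + 2))) * (1 - l ^ (a + 2))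
      ≤ (1 / n₀) * (1 + 1 / (4 * ((a : ℝ) + 1) * ((a : ℝ) + 2))) * (1 - l ^ (a + 2)) := by
  obtain ⟨hβ0, hβ1⟩ := hβ
  obtain ⟨hl0, hl1⟩ := hl
  have hs' : (0:ℝ) < s := by exact_mod_cast hs
  have ha1 : (0:ℝ) < (a:ℝ) + 1 := by positivity
  have ha2 : (0:ℝ) < (a:ℝ) + 2 := by positivity
  have hP : (0:ℝ) < ((a:ℝ) + 1) * ((a:ℝ) + 2) := by positivity
  have hX : (0:ℝ) ≤ 1 - l ^ (a + 2) := by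
    have := pow_le_one₀ hl0 hl1 (n := a + 2); linarith
  have hpow : l ^ (a + 2) ≤ l ^ (a + 1) :=
    pow_le_pow_of_le_one hl0 hl1 (Nat.le_succ (a + 1))
  constructor
  · -- first inequality
    have key : n₀ * ((a:ℝ) + 2 - β) ≤ (s:ℝ) * (((a:ℝ) + 1) * ((a:ℝ) + 2) + β * (1 - β)) := by
      have h1 : n₀ * ((a:ℝ) + 2 - β) ≤ (((a:ℝ) + β + 1) * s) * ((a:ℝ) + 2 - β) := by
        have : (0:ℝ) ≤ (a:ℝ) + 2 - β := by linarith
        exact mul_le_mul_of_nonneg_right hn₀' this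
      nlinarith [h1]
    have main : (1 / (s:ℝ)) * (((a:ℝ) + 2 - β) / (((a:ℝ) + 1) * ((a:ℝ) + 2)))
        ≤ (1 / n₀) * (1 + β * (1 - β) / (((a:ℝ) + 1) * ((a:ℝ) + 2))) := by
      have e1 : (1 / (s:ℝ)) * (((a:ℝ) + 2 - β) / (((a:ℝ) + 1) * ((a:ℝ) + 2)))
          = ((a:ℝ) + 2 - β) / ((s:ℝ) * (((a:ℝ) + 1) * ((a:ℝ) + 2))) := by
        field_simp
      have e2 : (1 / n₀) * (1 + β * (1 - β) / (((a:ℝ) + 1) * ((a:ℝ) + 2)))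
          = ((((a:ℝ) + 1) * ((a:ℝ) + 2)) + β * (1 - β)) / (n₀ * (((a:ℝ) + 1) * ((a:ℝ) + 2))) := by
        field_simp
      rw [e1, e2, div_le_div_iff₀ (by positivity) (by positivity)]
      nlinarith [key, mul_le_mul_of_nonneg_right key hP.le]
    calc (1 / (s : ℝ)) * ((1 - β) * (1 - l ^ (a + 1)) / ((a : ℝ) + 1)
            + β * (1 - l ^ (a + 2)) / ((a : ℝ) + 2))
        ≤ (1 / (s : ℝ)) * ((1 - β) * (1 - l ^ (a + 2)) / ((a : ℝ) + 1)
            + β * (1 - l ^ (a + 2)) / ((a : ℝ) + 2)) := by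
          gcongr
      _ = ((1 / (s:ℝ)) * (((a:ℝ) + 2 - β) / (((a:ℝ) + 1) * ((a:ℝ) + 2)))) * (1 - l ^ (a + 2)) := by
          field_simp; ring
      _ ≤ ((1 / n₀) * (1 + β * (1 - β) / (((a:ℝ) + 1) * ((a:ℝ) + 2)))) * (1 - l ^ (a + 2)) :=
          mul_le_mul_of_nonneg_right main hX
  · have h4 : β * (1 - β) ≤ 1 / 4 := by nlinarith [sq_nonneg (β - 1 / 2)]
    have hin : 1 + β * (1 - β) / (((a:ℝ) + 1) * ((a:ℝ) + 2))
        ≤ 1 + 1 / (4 * ((a:ℝ) + 1) * ((a:ℝ) + 2)) := by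
      have h5 : β * (1 - β) / (((a:ℝ) + 1) * ((a:ℝ) + 2)) ≤ (1/4) / (((a:ℝ) + 1) * ((a:ℝ) + 2)) := by
        gcongr
      have h6 : (1/4 : ℝ) / (((a:ℝ) + 1) * ((a:ℝ) + 2)) = 1 / (4 * ((a:ℝ) + 1) * ((a:ℝ) + 2)) := by
        field_simp
      linarith [h5, h6.le]
    have hn' : (0:ℝ) ≤ 1 / n₀ := by positivity
    calc (1 / n₀) * (1 + β * (1 - β) / (((a:ℝ) + 1) * ((a:ℝ) + 2))) * (1 - l ^ (a + 2))
        ≤ (1 / n₀) * (1 + 1 / (4 * ((a:ℝ) + 1) * ((a:ℝ) + 2))) * (1 - l ^ (a + 2)) := by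
          apply mul_le_mul_of_nonneg_right _ hX
          exact mul_le_mul_of_nonneg_left hin hn'
end
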